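/- arXiv:1612.08374 — 6 statements merged into one kernel-verified Lean document; each statement's English description precedes it below -/
import Mathlib

section
/- For every positive integer n, the alternating sum of products of complementary factorials satisfies: ∑_{j=0}^{n-1} (-1)^j · j! · (n-1-j)! equals 0 if n is even, and equals 2·n·(n-1)!/(n+1) if n is odd (equality of rational numbers). -/
/-!
Multiplying by `n + 2`, each summand splits as `f j - f (j + 1)` with
`f j = (-1)^j · j! · (n + 1 - j)!`, because `(n + 2) · j! · (n - j)! = j! · (n + 1 - j)! + (j + 1)! · (n - j)!`.
The sum telescopes to `f 0 - f (n + 1) = (1 - (-1)^(n + 1)) · (n + 1)!`.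
-/

open Finset Nat

theorem Nat.add_two_mul_factorial_mul_factorial {n j : ℕ} (hj : j ≤ n) :
    (n + 2) * (j ! * (n - j)!) = j ! * (n + 1 - j)! + (j + 1)! * (n - j)! := by
  obtain ⟨k, rfl⟩ := Nat.exists_eq_add_of_le hj
  rw [Nat.add_sub_cancel_left, show j + k + 1 - j = k + 1 by omega, factorial_succ, factorial_succ]
  ring

theorem add_two_mul_sum_range_neg_one_pow_mul_factorial_mul_factorial
    (R : Type*) [CommRing R] (n : ℕ) :
    (n + 2 : R) * ∑ j ∈ range (n + 1), (-1 : R) ^ j * j ! * (n - j)! =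
      (1 - (-1) ^ (n + 1)) * (n + 1)! := by
  set f : ℕ → R := fun j => (-1) ^ j * j ! * (n + 1 - j)!
  have hsplit : ∀ j ∈ range (n + 1),
      (n + 2 : R) * ((-1) ^ j * j ! * (n - j)!) = f j - f (j + 1) := by
    intro j hj
    have hnat := congrArg (Nat.cast : ℕ → R)
      (Nat.add_two_mul_factorial_mul_factorial (Nat.lt_succ_iff.mp (mem_range.mp hj)))
    push_cast at hnat
    simp only [f, Nat.add_sub_add_right, pow_succ]
    linear_combination (-1 : R) ^ j * hnat
  rw [mul_sum, sum_congr rfl hsplit, sum_range_sub']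
  simp only [f, pow_zero, factorial_zero, cast_one, mul_one, tsub_zero, one_mul, tsub_self]
  ring

theorem alternating_sum_complementary_factorials_general (n : ℕ) :
    ∑ j ∈ Finset.range n,
        (-1 : ℚ) ^ j * (Nat.factorial j : ℚ) * (Nat.factorial (n - 1 - j) : ℚ) =
      if Even n then 0 else 2 * n * (Nat.factorial (n - 1) : ℚ) / (n + 1) := by
  rcases n with _ | m
  · simp
  have hsum := add_two_mul_sum_range_neg_one_pow_mul_factorial_mul_factorial ℚ m
  have hm : (m + 2 : ℚ) ≠ 0 := by positivity
  simp only [Nat.add_sub_cancel]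
  push_cast
  rw [add_assoc, one_add_one_eq_two, eq_comm]
  split_ifs with heven
  · rw [heven.neg_one_pow, sub_self, zero_mul] at hsum
    exact ((mul_eq_zero.mp hsum).resolve_left hm).symm
  · rw [(Nat.not_even_iff_odd.mp heven).neg_one_pow, factorial_succ] at hsum
    push_cast at hsum
    rw [div_eq_iff hm]
    linear_combination -hsum

/-- For every positive integer `n`, the alternating sum
`∑_{j=0}^{n-1} (-1)^j · j! · (n-1-j)!` equals `0` if `n` is even and
`2·n·(n-1)!/(n+1)` if `n` is odd (as rational numbers). -/
theorem alternating_sum_complementary_factorials (n : ℕ) (hn : 0 < n) :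
    ∑ j ∈ Finset.range n,
        (-1 : ℚ) ^ j * (Nat.factorial j : ℚ) * (Nat.factorial (n - 1 - j) : ℚ) =
      if Even n then 0 else 2 * n * (Nat.factorial (n - 1) : ℚ) / (n + 1) :=
  alternating_sum_complementary_factorials_general n
end

section
/- For every integer d ≥ 2, the normalized lattice-point count (1/N^d) · ∑_{(w,h) ∈ ℕ₊², w·h ≤ N} w · C(w−1, d−2) tends to ζ(d) / (d · (d−2)!) as the natural number N tends to infinity, where ζ(d) = ∑_{k≥1} 1/k^d. -/
open Filter Topology

/-- `ζ(d) = ∑_{k ≥ 1} 1/k^d`. -/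
noncomputable def zetaVal (d : ℕ) : ℝ := ∑' k : ℕ, 1 / ((k : ℝ) + 1) ^ d

lemma aux_sum_w (e M : ℕ) :
    ∑ w ∈ Finset.Icc 1 M, w * Nat.choose (w - 1) e = (e + 1) * Nat.choose (M + 1) (e + 2) := by
  have h1 : ∀ w ∈ Finset.Icc 1 M, w * Nat.choose (w - 1) e = Nat.choose w (e + 1) * (e + 1) := by
    intro w hw
    rw [Finset.mem_Icc] at hw
    have h := Nat.add_one_mul_choose_eq (w - 1) e
    rwa [show w - 1 + 1 = w by omega] at h
  rw [Finset.sum_congr rfl h1, ← Finset.sum_mul]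
  have h2 : ∑ w ∈ Finset.Icc (e + 1) M, Nat.choose w (e + 1)
      = ∑ w ∈ Finset.Icc 1 M, Nat.choose w (e + 1) := by
    apply Finset.sum_subset
    · intro x hx
      rw [Finset.mem_Icc] at hx ⊢
      omega
    · intro x hx hx'
      rw [Finset.mem_Icc] at hx hx'
      exact Nat.choose_eq_zero_of_lt (by omega)
  rw [← h2, Nat.sum_Icc_choose, mul_comm]

lemma aux_filter (N h : ℕ) (hh : 1 ≤ h) :
    (Finset.Icc 1 N).filter (fun w => w * h ≤ N) = Finset.Icc 1 (N / h) := by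
  ext w
  simp only [Finset.mem_filter, Finset.mem_Icc]
  constructor
  · rintro ⟨⟨h1, _⟩, h3⟩
    exact ⟨h1, (Nat.le_div_iff_mul_le hh).2 h3⟩
  · rintro ⟨h1, h2⟩
    exact ⟨⟨h1, h2.trans (Nat.div_le_self N h)⟩, (Nat.le_div_iff_mul_le hh).1 h2⟩

lemma aux_total (e N : ℕ) :
    ∑ p ∈ (Finset.Icc 1 N ×ˢ Finset.Icc 1 N).filter (fun p : ℕ × ℕ => p.1 * p.2 ≤ N),
        (p.1 : ℝ) * (Nat.choose (p.1 - 1) e : ℝ)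
      = ∑ k ∈ Finset.range N, (((e + 1) * Nat.choose (N / (k + 1) + 1) (e + 2) : ℕ) : ℝ) := by
  rw [Finset.sum_filter, Finset.sum_product_right]
  have step1 : ∀ h ∈ Finset.Icc 1 N,
      (∑ w ∈ Finset.Icc 1 N, if w * h ≤ N then (w : ℝ) * (Nat.choose (w - 1) e : ℝ) else 0)
        = (((e + 1) * Nat.choose (N / h + 1) (e + 2) : ℕ) : ℝ) := by
    intro h hh
    rw [Finset.mem_Icc] at hh
    rw [← Finset.sum_filter, aux_filter N h hh.1, ← aux_sum_w e (N / h)]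
    push_cast
    ring_nf
  rw [Finset.sum_congr rfl step1]
  rw [← Finset.Ico_add_one_right_eq_Icc, Finset.sum_Ico_eq_sum_range]
  simp [add_comm]

lemma aux_lt_div (N h : ℕ) (hh : 0 < h) : N < (N / h + 1) * h := by
  calc N = h * (N / h) + N % h := (Nat.div_add_mod N h).symm
    _ < h * (N / h) + h := Nat.add_lt_add_left (Nat.mod_lt N hh) _
    _ = (N / h + 1) * h := by ring

lemma aux_tendsto_factor (h : ℕ) (hh : 0 < h) (i : ℕ) :
    Tendsto (fun N : ℕ => ((N / h + 1 - i : ℕ) : ℝ) / N) atTop (𝓝 (1 / h)) := by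
  have hhr : (0 : ℝ) < h := by exact_mod_cast hh
  apply tendsto_of_tendsto_of_tendsto_of_le_of_le'
    (g := fun N : ℕ => 1 / (h : ℝ) - (i : ℝ) / N) (h := fun N : ℕ => 1 / (h : ℝ) + 1 / N)
  · simpa using tendsto_const_nhds.sub (tendsto_const_div_atTop_nhds_zero_nat (i : ℝ))
  · simpa using tendsto_const_nhds.add (tendsto_const_div_atTop_nhds_zero_nat (1 : ℝ))
  · filter_upwards [eventually_ge_atTop (h * (i + 1))] with N hN
    have hNpos : 0 < N := lt_of_lt_of_le (by positivity) hN
    have hdiv : i + 1 ≤ N / h := (Nat.le_div_iff_mul_le hh).2 (by rw [mul_comm]; exact hN)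
    have hN0 : (0 : ℝ) < N := by exact_mod_cast hNpos
    have hcast : ((N / h + 1 - i : ℕ) : ℝ) = ((N / h : ℕ) : ℝ) + 1 - i := by
      rw [Nat.cast_sub (by omega)]; push_cast; ring
    have hlow : (N : ℝ) / h < ((N / h : ℕ) : ℝ) + 1 := by
      have := aux_lt_div N h hh
      have h2 : (N : ℝ) < (((N / h : ℕ) : ℝ) + 1) * h := by exact_mod_cast this
      rw [div_lt_iff₀ hhr]
      exact h2
    rw [le_div_iff₀ hN0, hcast]
    have : (1 / (h : ℝ) - (i : ℝ) / N) * N = (N : ℝ) / h - i := by field_simp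
    rw [this]
    linarith
  · filter_upwards [eventually_ge_atTop (h * (i + 1))] with N hN
    have hNpos : 0 < N := lt_of_lt_of_le (by positivity) hN
    have hdiv : i + 1 ≤ N / h := (Nat.le_div_iff_mul_le hh).2 (by rw [mul_comm]; exact hN)
    have hN0 : (0 : ℝ) < N := by exact_mod_cast hNpos
    have hcast : ((N / h + 1 - i : ℕ) : ℝ) = ((N / h : ℕ) : ℝ) + 1 - i := by
      rw [Nat.cast_sub (by omega)]; push_cast; ring
    have hup : ((N / h : ℕ) : ℝ) ≤ (N : ℝ) / h := Nat.cast_div_le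
    rw [div_le_iff₀ hN0, hcast]
    have : (1 / (h : ℝ) + 1 / N) * N = (N : ℝ) / h + 1 := by field_simp
    rw [this]
    have hi : (0 : ℝ) ≤ i := by positivity
    linarith

/-- For every integer `d ≥ 2`, the normalized lattice-point count
`(1/N^d) · ∑_{(w,h) ∈ ℕ₊², w·h ≤ N} w · C(w−1, d−2)` tends to
`ζ(d) / (d · (d−2)!)` as `N → ∞`. -/
theorem one_cylinder_diagram_count_asymptotics (d : ℕ) (hd : 2 ≤ d) :
    Tendsto (fun N : ℕ =>
        (1 / (N : ℝ) ^ d) *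
          ∑ p ∈ (Finset.Icc 1 N ×ˢ Finset.Icc 1 N).filter
              (fun p : ℕ × ℕ => p.1 * p.2 ≤ N),
            (p.1 : ℝ) * (Nat.choose (p.1 - 1) (d - 2) : ℝ))
      atTop (nhds (zetaVal d / (d * Nat.factorial (d - 2)))) := by
  obtain ⟨e, rfl⟩ : ∃ e, d = e + 2 := ⟨d - 2, by omega⟩
  simp only [Nat.add_sub_cancel]
  set F : ℕ → ℕ → ℝ :=
    fun N k => (1 / (N : ℝ) ^ (e + 2)) *
      (((e + 1) * Nat.choose (N / (k + 1) + 1) (e + 2) : ℕ) : ℝ) with hF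
  have hfacpos : (0 : ℝ) < (Nat.factorial (e + 2) : ℝ) := by
    exact_mod_cast (e + 2).factorial_pos
  have hsummable : Summable (fun k : ℕ => 1 / ((k : ℝ) + 1) ^ (e + 2)) := by
    have h1 : Summable (fun n : ℕ => 1 / (n : ℝ) ^ (e + 2)) :=
      Real.summable_one_div_nat_pow.mpr (by omega)
    have := (summable_nat_add_iff 1).2 h1
    simpa using this
  have hmain : ∀ N : ℕ,
      (1 / (N : ℝ) ^ (e + 2)) *
        ∑ p ∈ (Finset.Icc 1 N ×ˢ Finset.Icc 1 N).filter
            (fun p : ℕ × ℕ => p.1 * p.2 ≤ N),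
          (p.1 : ℝ) * (Nat.choose (p.1 - 1) e : ℝ) = ∑' k, F N k := by
    intro N
    rw [aux_total e N]
    rw [tsum_eq_sum (s := Finset.range N) (f := fun k => F N k) ?_, Finset.mul_sum]
    intro k hk
    simp only [Finset.mem_range, not_lt] at hk
    have hdiv : N / (k + 1) = 0 := Nat.div_eq_of_lt (by omega)
    simp [hF, hdiv, Nat.choose_eq_zero_of_lt (show 1 < e + 2 by omega)]
  simp only [hmain]
  -- the limit function
  set g : ℕ → ℝ :=
    fun k => (1 / (((e : ℝ) + 2) * (Nat.factorial e : ℝ))) * (1 / ((k : ℝ) + 1) ^ (e + 2))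
    with hg
  have hfac : ((e + 2).factorial : ℝ) = ((e : ℝ) + 2) * ((e : ℝ) + 1) * (e.factorial : ℝ) := by
    rw [show e + 2 = (e + 1) + 1 from rfl, Nat.factorial_succ, Nat.factorial_succ]
    push_cast
    ring
  have hefacpos : (0 : ℝ) < (Nat.factorial e : ℝ) := by exact_mod_cast e.factorial_pos
  have htsum : ∑' k, g k = zetaVal (e + 2) / (((e + 2 : ℕ) : ℝ) * (Nat.factorial e : ℝ)) := by
    rw [hg, tsum_mul_left]
    unfold zetaVal
    push_cast
    rw [one_div_mul_eq_div]
  rw [← htsum]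
  apply tendsto_tsum_of_dominated_convergence
    (bound := fun k : ℕ => ((e + 1 : ℝ) * 2 ^ (e + 2) / (Nat.factorial (e + 2) : ℝ)) *
      (1 / ((k : ℝ) + 1) ^ (e + 2)))
  · exact hsummable.mul_left _
  · -- pointwise convergence
    intro k
    have hk1 : (0 : ℝ) < (k : ℝ) + 1 := by positivity
    have hprod : Tendsto
        (fun N : ℕ => ∏ i ∈ Finset.range (e + 2), (((N / (k + 1) + 1 - i : ℕ) : ℝ) / N))
        atTop (𝓝 (∏ _i ∈ Finset.range (e + 2), 1 / ((k : ℝ) + 1))) := by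
      apply tendsto_finset_prod
      intro i _
      have := aux_tendsto_factor (k + 1) k.succ_pos i
      simpa using this
    rw [Finset.prod_const, Finset.card_range] at hprod
    have hlim := hprod.const_mul (((e : ℝ) + 1) / (Nat.factorial (e + 2) : ℝ))
    have heq : ∀ᶠ N : ℕ in atTop,
        ((e : ℝ) + 1) / (Nat.factorial (e + 2) : ℝ) *
          ∏ i ∈ Finset.range (e + 2), (((N / (k + 1) + 1 - i : ℕ) : ℝ) / N) = F N k := by
      filter_upwards [eventually_ge_atTop 1] with N hN
      have hN0 : (0 : ℝ) < (N : ℝ) := by exact_mod_cast hN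
      rw [Finset.prod_div_distrib, Finset.prod_const, Finset.card_range,
        ← Nat.cast_prod, ← Nat.descFactorial_eq_prod_range,
        Nat.descFactorial_eq_factorial_mul_choose]
      rw [hF]
      push_cast
      field_simp
    have h1 : ((k : ℝ) + 1) ^ (e + 2) ≠ 0 := by positivity
    have h2 : ((e : ℝ) + 2) ≠ 0 := by positivity
    have h4 : (e.factorial : ℝ) ≠ 0 := by positivity
    have hval : g k = ((e : ℝ) + 1) / ((Nat.factorial (e + 2)) : ℝ) *
        (1 / ((k : ℝ) + 1)) ^ (e + 2) := by
      rw [hg]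
      simp only
      rw [hfac, div_pow, one_pow]
      field_simp
    rw [hval]
    exact Tendsto.congr' heq hlim
  · -- bound
    filter_upwards [eventually_ge_atTop 1] with N hN
    intro k
    have hN0 : (0 : ℝ) < (N : ℝ) := by exact_mod_cast hN
    have hk1 : (0 : ℝ) < ((k : ℝ) + 1) ^ (e + 2) := by positivity
    rw [Real.norm_eq_abs, abs_of_nonneg (by rw [hF]; positivity)]
    by_cases hk : k + 1 ≤ N
    · set M := N / (k + 1) with hM
      have h1 : Nat.factorial (e + 2) * Nat.choose (M + 1) (e + 2) ≤ (M + 1) ^ (e + 2) := by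
        rw [← Nat.descFactorial_eq_factorial_mul_choose]
        exact Nat.descFactorial_le_pow _ _
      have h2 : (M + 1) * (k + 1) ≤ 2 * N := by
        have hdm := Nat.div_mul_le_self N (k + 1)
        calc (M + 1) * (k + 1) = M * (k + 1) + (k + 1) := by ring
          _ ≤ N + N := add_le_add hdm hk
          _ = 2 * N := by ring
      have h3 : (e + 1) * Nat.choose (M + 1) (e + 2) *
          (Nat.factorial (e + 2) * (k + 1) ^ (e + 2)) ≤ (e + 1) * 2 ^ (e + 2) * N ^ (e + 2) := by
        calc (e + 1) * Nat.choose (M + 1) (e + 2) * (Nat.factorial (e + 2) * (k + 1) ^ (e + 2))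
            = (e + 1) * ((Nat.factorial (e + 2) * Nat.choose (M + 1) (e + 2)) * (k + 1) ^ (e + 2)) := by
              ring
          _ ≤ (e + 1) * ((M + 1) ^ (e + 2) * (k + 1) ^ (e + 2)) := by
              exact Nat.mul_le_mul_left _ (Nat.mul_le_mul_right _ h1)
          _ = (e + 1) * ((M + 1) * (k + 1)) ^ (e + 2) := by rw [mul_pow]
          _ ≤ (e + 1) * (2 * N) ^ (e + 2) := by
              exact Nat.mul_le_mul_left _ (Nat.pow_le_pow_left h2 _)
          _ = (e + 1) * 2 ^ (e + 2) * N ^ (e + 2) := by rw [mul_pow]; ring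
      have hcast : ((e : ℝ) + 1) * (Nat.choose (M + 1) (e + 2) : ℝ) *
          ((Nat.factorial (e + 2) : ℝ) * ((k : ℝ) + 1) ^ (e + 2))
          ≤ ((e : ℝ) + 1) * 2 ^ (e + 2) * (N : ℝ) ^ (e + 2) := by
        exact_mod_cast h3
      rw [hF]
      push_cast
      have lhs_eq : 1 / ((N : ℝ)) ^ (e + 2) * (((e : ℝ) + 1) * ((Nat.choose (M + 1) (e + 2)) : ℝ))
          = (((e : ℝ) + 1) * ((Nat.choose (M + 1) (e + 2)) : ℝ)) / (N : ℝ) ^ (e + 2) := by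
        rw [one_div, inv_mul_eq_div]
      have rhs_eq : ((e : ℝ) + 1) * 2 ^ (e + 2) / ((Nat.factorial (e + 2)) : ℝ) *
          (1 / ((k : ℝ) + 1) ^ (e + 2))
          = (((e : ℝ) + 1) * 2 ^ (e + 2)) /
            (((Nat.factorial (e + 2)) : ℝ) * ((k : ℝ) + 1) ^ (e + 2)) := by
        rw [div_mul_div_comm, mul_one]
      rw [lhs_eq, rhs_eq, div_le_div_iff₀ (by positivity) (by positivity)]
      linarith [hcast]
    · have hdiv : N / (k + 1) = 0 := Nat.div_eq_of_lt (by omega)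
      rw [hF]
      simp only [hdiv, Nat.choose_eq_zero_of_lt (show 1 < e + 2 by omega), Nat.mul_zero,
        Nat.cast_zero, mul_zero]
      positivity
end

section
/- The normalized count (1/N⁴) · ∑ ℓ₁·(ℓ₁+ℓ₂), where the sum ranges over all quadruples of positive integers (ℓ₁, ℓ₂, h₁, h₂) satisfying ℓ₁·h₁ + (ℓ₁+ℓ₂)·h₂ ≤ N, tends to (5/96)·ζ(4) = π⁴/1728 as the natural number N tends to infinity. -/
open Filter

open Finset in
lemma sum_Icc_id' (A : ℕ) : ∑ a ∈ Icc 1 A, (a:ℝ) = A*(A+1)/2 := by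
  induction A with
  | zero => simp
  | succ n ih => rw [Finset.sum_Icc_succ_top (by omega)]; push_cast; rw [ih]; ring

open Finset in
lemma sum_Icc_sq' (A : ℕ) : ∑ a ∈ Icc 1 A, (a:ℝ)^2 = A*(A+1)*(2*A+1)/6 := by
  induction A with
  | zero => simp
  | succ n ih => rw [Finset.sum_Icc_succ_top (by omega)]; push_cast; rw [ih]; ring

open Finset in
lemma sum_Icc_cube' (A : ℕ) : ∑ a ∈ Icc 1 A, (a:ℝ)^3 = (A*(A+1))^2/4 := by
  induction A with
  | zero => simp
  | succ n ih => rw [Finset.sum_Icc_succ_top (by omega)]; push_cast; rw [ih]; ring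

lemma nat_div_ge' (M h : ℕ) (hh : 1 ≤ h) : (M:ℝ)/h - 1 ≤ ((M/h : ℕ):ℝ) := by
  have h1 : M < (M/h + 1) * h := by
    by_contra hcon
    push_neg at hcon
    have := (Nat.le_div_iff_mul_le (by omega : 0 < h)).mpr hcon
    omega
  have hhp : (0:ℝ) < h := by exact_mod_cast hh
  rw [sub_le_iff_le_add, div_le_iff₀ hhp]
  calc (M:ℝ) ≤ ((M/h + 1) * h : ℕ) := by exact_mod_cast h1.le
    _ = (((M/h : ℕ):ℝ) + 1) * h := by push_cast; ring

lemma nat_div_le' (M h : ℕ) : ((M/h : ℕ):ℝ) ≤ (M:ℝ)/h := by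
  rcases Nat.eq_zero_or_pos h with rfl|hh
  · simp
  · rw [le_div_iff₀ (by exact_mod_cast hh)]
    exact_mod_cast Nat.div_mul_le_self M h

lemma one_div_cast_tendsto' (h : ℕ) (hh : 1 ≤ h) :
    Tendsto (fun N : ℕ => ((N/h : ℕ):ℝ)/N) atTop (nhds ((1:ℝ)/h)) := by
  have hhp : (0:ℝ) < h := by exact_mod_cast hh
  have hlow : Tendsto (fun N : ℕ => (1:ℝ)/h - 1/N) atTop (nhds ((1:ℝ)/h)) := by
    simpa using (tendsto_const_nhds (x := (1:ℝ)/h)).sub tendsto_one_div_atTop_nhds_zero_nat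
  refine tendsto_of_tendsto_of_tendsto_of_le_of_le' hlow tendsto_const_nhds ?_ ?_
  · filter_upwards [eventually_ge_atTop 1] with N hN
    have hNp : (0:ℝ) < N := by exact_mod_cast hN
    have h2 := nat_div_ge' N h hh
    calc (1:ℝ)/h - 1/N = ((N:ℝ)/h - 1)/N := by field_simp
      _ ≤ ((N/h:ℕ):ℝ)/N := by gcongr
  · filter_upwards with N
    rcases Nat.eq_zero_or_pos N with rfl|hN
    · simp [hhp.le]
    · have hNp : (0:ℝ) < N := by exact_mod_cast hN
      rw [div_le_div_iff₀ hNp hhp]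
      calc ((N/h:ℕ):ℝ) * h ≤ (N:ℝ)/h * h :=
            mul_le_mul_of_nonneg_right (nat_div_le' N h) hhp.le
        _ = N := by field_simp
        _ = 1 * N := by ring

/-- triangular number as a real -/
noncomputable def tri (k : ℕ) : ℝ := (k:ℝ)*((k:ℝ)+1)/2

lemma tri_ub (M h : ℕ) :
    tri (M/h) ≤ ((M:ℝ)/h)*((M:ℝ)/h + 1)/2 := by
  have h1 := nat_div_le' M h
  have h2 : (0:ℝ) ≤ ((M/h:ℕ):ℝ) := Nat.cast_nonneg _
  unfold tri
  nlinarith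

lemma tri_lb (M h : ℕ) (hh : 1 ≤ h) :
    ((M:ℝ)/h - 1)*((M:ℝ)/h)/2 ≤ tri (M/h) := by
  have h1 := nat_div_le' M h
  have h2 : (0:ℝ) ≤ ((M/h:ℕ):ℝ) := Nat.cast_nonneg _
  have h3 := nat_div_ge' M h hh
  have h4 : (0:ℝ) ≤ (M:ℝ)/h := by positivity
  unfold tri
  nlinarith [mul_nonneg (by linarith : (0:ℝ) ≤ ((M/h:ℕ):ℝ) - ((M:ℝ)/h - 1)) h4,
    mul_nonneg h2 (by linarith : (0:ℝ) ≤ ((M/h:ℕ):ℝ) + 1 - (M:ℝ)/h)]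

open Finset in
lemma inner_closed (h M N : ℕ) (hh : 1 ≤ h) (hMN : M ≤ N) :
    ∑ b ∈ Icc 1 N, (if b*h ≤ M then (b:ℝ) else 0) = tri (M/h) := by
  rw [← Finset.sum_filter]
  have hset : (Icc 1 N).filter (fun b => b*h ≤ M) = Icc 1 (M/h) := by
    ext b
    simp only [Finset.mem_filter, Finset.mem_Icc]
    constructor
    · rintro ⟨⟨h1, _⟩, h3⟩
      exact ⟨h1, (Nat.le_div_iff_mul_le (by omega)).mpr h3⟩
    · rintro ⟨h1, h2⟩
      have h3 := (Nat.le_div_iff_mul_le (by omega : 0 < h)).mp h2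
      refine ⟨⟨h1, ?_⟩, h3⟩
      calc b ≤ b*h := Nat.le_mul_of_pos_right b (by omega)
        _ ≤ M := h3
        _ ≤ N := hMN
  rw [hset, sum_Icc_id']
  unfold tri; ring

/-- The inner double sum over `(a, b)` for fixed heights. -/
noncomputable def gsum (h₁ h₂ N : ℕ) : ℝ :=
  ∑ a ∈ Finset.Icc 1 N, ∑ b ∈ Finset.Icc 1 N,
    if a*h₁ + b*h₂ ≤ N then (a:ℝ)*b else 0

open Finset in
lemma gsum_eq (h₁ h₂ N : ℕ) (H2 : 1 ≤ h₂) :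
    gsum h₁ h₂ N = ∑ a ∈ Icc 1 N, (a:ℝ) * tri ((N - a*h₁)/h₂) := by
  unfold gsum
  refine Finset.sum_congr rfl fun a _ => ?_
  have key : ∀ b ∈ Icc 1 N,
      (if a*h₁ + b*h₂ ≤ N then (a:ℝ)*b else 0)
        = (a:ℝ)*(if b*h₂ ≤ N - a*h₁ then (b:ℝ) else 0) := by
    intro b hb
    have hb1 : 1 ≤ b := (Finset.mem_Icc.mp hb).1
    have hbh : 1 ≤ b*h₂ := le_trans (by omega) (Nat.mul_le_mul hb1 H2)
    have hiff : (a*h₁ + b*h₂ ≤ N) ↔ (b*h₂ ≤ N - a*h₁) := by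
      set X := a*h₁; set Y := b*h₂; omega
    rw [if_congr hiff rfl rfl]
    split <;> simp
  rw [Finset.sum_congr rfl key, ← Finset.mul_sum,
    inner_closed h₂ (N - a*h₁) N H2 (Nat.sub_le _ _)]

open Finset in
lemma gsum_restrict (h₁ h₂ N : ℕ) (H1 : 1 ≤ h₁) (H2 : 1 ≤ h₂) :
    gsum h₁ h₂ N = ∑ a ∈ Icc 1 (N/h₁), (a:ℝ) * tri ((N - a*h₁)/h₂) := by
  rw [gsum_eq h₁ h₂ N H2]
  symm
  apply Finset.sum_subset
  · exact Finset.Icc_subset_Icc_right (Nat.div_le_self N h₁)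
  · intro a ha ha'
    simp only [Finset.mem_Icc] at ha ha'
    have : N/h₁ < a := by omega
    have h2 : N < a * h₁ := by
      have := (Nat.div_lt_iff_lt_mul (by omega : 0 < h₁)).mp this
      omega
    have : N - a*h₁ = 0 := by omega
    rw [this]
    simp [tri]

open Finset in
lemma sum_cubic (A : ℕ) (c1 c2 c3 : ℝ) :
    ∑ a ∈ Icc 1 A, (c1*(a:ℝ) + c2*(a:ℝ)^2 + c3*(a:ℝ)^3)
      = c1*((A:ℝ)*(A+1)/2) + c2*((A:ℝ)*(A+1)*(2*A+1)/6) + c3*(((A:ℝ)*(A+1))^2/4) := by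
  simp only [Finset.sum_add_distrib, ← Finset.mul_sum, sum_Icc_id', sum_Icc_sq', sum_Icc_cube']

-- Main pointwise limit: `gsum h₁ h₂ N / N⁴ → 1/(24 h₁² h₂²)`.
set_option maxHeartbeats 1000000 in
open Finset in
lemma gsum_tendsto (h₁ h₂ : ℕ) (H1 : 1 ≤ h₁) (H2 : 1 ≤ h₂) :
    Tendsto (fun N : ℕ => gsum h₁ h₂ N / (N:ℝ)^4) atTop
      (nhds (1/(24*(h₁:ℝ)^2*(h₂:ℝ)^2))) := by
  have hh1 : (0:ℝ) < h₁ := by exact_mod_cast H1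
  have hh2 : (0:ℝ) < h₂ := by exact_mod_cast H2
  set F : ℝ × ℝ → ℝ := fun p =>
    ((1+h₂*p.2)*(p.1*(p.1+p.2))/2
      - (2*h₁+h₁*h₂*p.2)*(p.1*(p.1+p.2)*(2*p.1+p.2))/6
      + h₁^2*(p.1*(p.1+p.2))^2/4)/(2*h₂^2) with hFdef
  set G : ℝ × ℝ → ℝ := fun p =>
    ((1-h₂*p.2)*(p.1*(p.1+p.2))/2
      - (2*h₁-h₁*h₂*p.2)*(p.1*(p.1+p.2)*(2*p.1+p.2))/6
      + h₁^2*(p.1*(p.1+p.2))^2/4)/(2*h₂^2) with hGdef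
  have hFc : Continuous F := by
    apply Continuous.div_const; fun_prop
  have hGc : Continuous G := by
    apply Continuous.div_const; fun_prop
  have hpair : Tendsto (fun N : ℕ => (((N/h₁ : ℕ):ℝ)/N, 1/(N:ℝ))) atTop
      (nhds (1/(h₁:ℝ), 0)) :=
    (one_div_cast_tendsto' h₁ H1).prodMk_nhds tendsto_one_div_atTop_nhds_zero_nat
  have hFt := (hFc.tendsto _).comp hpair
  have hGt := (hGc.tendsto _).comp hpair
  have hFval : F (1/(h₁:ℝ), 0) = 1/(24*(h₁:ℝ)^2*(h₂:ℝ)^2) := by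
    simp only [hFdef]; field_simp; ring
  have hGval : G (1/(h₁:ℝ), 0) = 1/(24*(h₁:ℝ)^2*(h₂:ℝ)^2) := by
    simp only [hGdef]; field_simp; ring
  rw [hFval] at hFt; rw [hGval] at hGt
  refine tendsto_of_tendsto_of_tendsto_of_le_of_le' hGt hFt ?_ ?_
  · -- lower bound
    filter_upwards [eventually_ge_atTop 1] with N hN
    simp only [Function.comp_apply]
    have hN0 : (0:ℝ) < N := by exact_mod_cast hN
    set A := N/h₁ with hAdef
    have hAmem : ∀ a ∈ Icc 1 A, a * h₁ ≤ N := by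
      intro a ha
      exact (Nat.le_div_iff_mul_le (by omega : 0 < h₁)).mp (Finset.mem_Icc.mp ha).2
    have hlo : ∑ a ∈ Icc 1 A,
        (((N:ℝ)^2-N*h₂)/(2*h₂^2)*(a:ℝ) + (-(2*N*h₁-h₁*h₂))/(2*h₂^2)*(a:ℝ)^2
          + (h₁:ℝ)^2/(2*h₂^2)*(a:ℝ)^3) ≤ gsum h₁ h₂ N := by
      rw [gsum_restrict h₁ h₂ N H1 H2]
      apply Finset.sum_le_sum
      intro a ha
      have hle := hAmem a ha
      have hcast : ((N - a*h₁ : ℕ):ℝ) = (N:ℝ) - a*h₁ := by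
        push_cast [Nat.cast_sub hle]; ring
      have hlb := tri_lb (N - a*h₁) h₂ H2
      rw [hcast] at hlb
      calc ((N:ℝ)^2-N*h₂)/(2*h₂^2)*(a:ℝ) + (-(2*N*h₁-h₁*h₂))/(2*h₂^2)*(a:ℝ)^2
            + (h₁:ℝ)^2/(2*h₂^2)*(a:ℝ)^3
          = (a:ℝ) * ((((N:ℝ) - a*h₁)/h₂ - 1)*(((N:ℝ) - a*h₁)/h₂)/2) := by
            field_simp; ring
        _ ≤ (a:ℝ) * tri ((N - a*h₁)/h₂) :=
            mul_le_mul_of_nonneg_left hlb (Nat.cast_nonneg a)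
    rw [sum_cubic] at hlo
    have hGeq : G (((A:ℕ):ℝ)/N, 1/(N:ℝ))
        = (((N:ℝ)^2-N*h₂)/(2*h₂^2)*((A:ℝ)*(A+1)/2)
          + (-(2*N*h₁-h₁*h₂))/(2*h₂^2)*((A:ℝ)*(A+1)*(2*A+1)/6)
          + (h₁:ℝ)^2/(2*h₂^2)*(((A:ℝ)*(A+1))^2/4)) / (N:ℝ)^4 := by
      simp only [hGdef]
      field_simp
      ring
    rw [hGeq]
    gcongr
  · -- upper bound
    filter_upwards [eventually_ge_atTop 1] with N hN
    simp only [Function.comp_apply]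
    have hN0 : (0:ℝ) < N := by exact_mod_cast hN
    set A := N/h₁ with hAdef
    have hAmem : ∀ a ∈ Icc 1 A, a * h₁ ≤ N := by
      intro a ha
      exact (Nat.le_div_iff_mul_le (by omega : 0 < h₁)).mp (Finset.mem_Icc.mp ha).2
    have hup : gsum h₁ h₂ N ≤ ∑ a ∈ Icc 1 A,
        (((N:ℝ)^2+N*h₂)/(2*h₂^2)*(a:ℝ) + (-(2*N*h₁+h₁*h₂))/(2*h₂^2)*(a:ℝ)^2
          + (h₁:ℝ)^2/(2*h₂^2)*(a:ℝ)^3) := by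
      rw [gsum_restrict h₁ h₂ N H1 H2]
      apply Finset.sum_le_sum
      intro a ha
      have hle := hAmem a ha
      have hcast : ((N - a*h₁ : ℕ):ℝ) = (N:ℝ) - a*h₁ := by
        push_cast [Nat.cast_sub hle]; ring
      have hub := tri_ub (N - a*h₁) h₂
      rw [hcast] at hub
      calc (a:ℝ) * tri ((N - a*h₁)/h₂)
          ≤ (a:ℝ) * ((((N:ℝ) - a*h₁)/h₂)*(((N:ℝ) - a*h₁)/h₂ + 1)/2) :=
            mul_le_mul_of_nonneg_left hub (Nat.cast_nonneg a)
        _ = _ := by field_simp; ring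
    rw [sum_cubic] at hup
    have hFeq : F (((A:ℕ):ℝ)/N, 1/(N:ℝ))
        = (((N:ℝ)^2+N*h₂)/(2*h₂^2)*((A:ℝ)*(A+1)/2)
          + (-(2*N*h₁+h₁*h₂))/(2*h₂^2)*((A:ℝ)*(A+1)*(2*A+1)/6)
          + (h₁:ℝ)^2/(2*h₂^2)*(((A:ℝ)*(A+1))^2/4)) / (N:ℝ)^4 := by
      simp only [hFdef]
      field_simp
      ring
    rw [hFeq]
    gcongr

lemma gsum_nonneg (h₁ h₂ N : ℕ) : 0 ≤ gsum h₁ h₂ N := by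
  unfold gsum
  apply Finset.sum_nonneg
  intro a _
  apply Finset.sum_nonneg
  intro b _
  split <;> positivity

open Finset in
lemma gsum_zero (h₁ h₂ N : ℕ) (h : N < h₁ ∨ N < h₂) : gsum h₁ h₂ N = 0 := by
  unfold gsum
  apply Finset.sum_eq_zero
  intro a ha
  apply Finset.sum_eq_zero
  intro b hb
  rw [if_neg]
  have ha1 : 1 ≤ a := (Finset.mem_Icc.mp ha).1
  have hb1 : 1 ≤ b := (Finset.mem_Icc.mp hb).1
  have h1 : h₁ ≤ a * h₁ := Nat.le_mul_of_pos_left h₁ (by omega)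
  have h2 : h₂ ≤ b * h₂ := Nat.le_mul_of_pos_left h₂ (by omega)
  omega

lemma tri_div_le_sq (N h : ℕ) : tri (N/h) ≤ ((N:ℝ)/h)^2 := by
  have h1 := nat_div_le' N h
  rcases Nat.eq_zero_or_pos (N/h) with he|hp
  · rw [he]
    simp only [tri, Nat.cast_zero, zero_mul, zero_div]
    positivity
  · have h2 : (1:ℝ) ≤ ((N/h : ℕ):ℝ) := by exact_mod_cast hp
    unfold tri
    nlinarith

open Finset in
lemma gsum_bound (h₁ h₂ N : ℕ) (H1 : 1 ≤ h₁) (H2 : 1 ≤ h₂) :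
    gsum h₁ h₂ N ≤ (N:ℝ)^4/((h₁:ℝ)^2*(h₂:ℝ)^2) := by
  have hh1 : (0:ℝ) < h₁ := by exact_mod_cast H1
  have hh2 : (0:ℝ) < h₂ := by exact_mod_cast H2
  have step1 : gsum h₁ h₂ N ≤
      (∑ a ∈ Icc 1 N, (if a*h₁ ≤ N then (a:ℝ) else 0)) *
      (∑ b ∈ Icc 1 N, (if b*h₂ ≤ N then (b:ℝ) else 0)) := by
    rw [Finset.sum_mul_sum]
    unfold gsum
    apply Finset.sum_le_sum
    intro a _
    apply Finset.sum_le_sum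
    intro b _
    by_cases hc : a*h₁ + b*h₂ ≤ N
    · have hc2 : a*h₁ ≤ N ∧ b*h₂ ≤ N := by omega
      rw [if_pos hc, if_pos hc2.1, if_pos hc2.2]
    · rw [if_neg hc]
      apply mul_nonneg <;> (split <;> positivity)
  calc gsum h₁ h₂ N ≤ _ := step1
    _ = tri (N/h₁) * tri (N/h₂) := by
        rw [inner_closed h₁ N N H1 le_rfl, inner_closed h₂ N N H2 le_rfl]
    _ ≤ ((N:ℝ)/h₁)^2 * ((N:ℝ)/h₂)^2 := by
        have t1 := tri_div_le_sq N h₁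
        have t2 := tri_div_le_sq N h₂
        have n1 : 0 ≤ tri (N/h₁) := by unfold tri; positivity
        have n2 : 0 ≤ tri (N/h₂) := by unfold tri; positivity
        have : (0:ℝ) ≤ ((N:ℝ)/h₁)^2 := by positivity
        nlinarith
    _ = (N:ℝ)^4/((h₁:ℝ)^2*(h₂:ℝ)^2) := by field_simp

/-- The summand function for dominated convergence. -/
noncomputable def fN (N : ℕ) (p : ℕ × ℕ) : ℝ := gsum (p.1+1) (p.2+1) N / (N:ℝ)^4

lemma fN_norm_bound (N : ℕ) (p : ℕ × ℕ) :
    ‖fN N p‖ ≤ (1/((p.1:ℝ)+1)^2) * (1/((p.2:ℝ)+1)^2) := by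
  have hnn : 0 ≤ fN N p := by
    unfold fN
    have := gsum_nonneg (p.1+1) (p.2+1) N
    positivity
  rw [Real.norm_eq_abs, abs_of_nonneg hnn]
  rcases Nat.eq_zero_or_pos N with rfl|hN
  · unfold fN
    simp
    positivity
  · have hN0 : (0:ℝ) < N := by exact_mod_cast hN
    unfold fN
    rw [div_le_iff₀ (by positivity)]
    have := gsum_bound (p.1+1) (p.2+1) N (by omega) (by omega)
    calc gsum (p.1+1) (p.2+1) N ≤ (N:ℝ)^4/(((p.1+1:ℕ):ℝ)^2*((p.2+1:ℕ):ℝ)^2) := this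
      _ = 1/((p.1:ℝ)+1)^2 * (1/((p.2:ℝ)+1)^2) * (N:ℝ)^4 := by push_cast; field_simp
    
lemma basel_hasSum : HasSum (fun n : ℕ => 1/((n:ℝ)+1)^2) (Real.pi^2/6) := by
  have h := hasSum_zeta_two
  have h2 := (hasSum_nat_add_iff' (f := fun n : ℕ => (1:ℝ)/(n:ℝ)^2) 1).mpr h
  simp only [Finset.range_one, Finset.sum_singleton, Nat.cast_zero] at h2
  norm_num at h2
  simpa [one_div] using h2

lemma zeta4_hasSum : HasSum (fun n : ℕ => 1/((n:ℝ)+1)^4) (Real.pi^4/90) := by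
  have h := hasSum_zeta_four
  have h2 := (hasSum_nat_add_iff' (f := fun n : ℕ => (1:ℝ)/(n:ℝ)^4) 1).mpr h
  simp only [Finset.range_one, Finset.sum_singleton, Nat.cast_zero] at h2
  norm_num at h2
  simpa [one_div] using h2

lemma basel_summable : Summable (fun n : ℕ => 1/((n:ℝ)+1)^2) := basel_hasSum.summable

lemma bound_summable :
    Summable (fun p : ℕ × ℕ => (1/((p.1:ℝ)+1)^2) * (1/((p.2:ℝ)+1)^2)) := by
  apply Summable.mul_of_nonneg basel_summable basel_summable
  · intro n; positivity
  · intro n; positivity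

set_option maxHeartbeats 1000000 in
lemma prod_hasSum :
    HasSum (fun p : ℕ × ℕ => (1/((p.1:ℝ)+1)^2) * (1/((p.2:ℝ)+1)^2))
      ((Real.pi^2/6) * (Real.pi^2/6)) := by
  exact HasSum.mul basel_hasSum basel_hasSum bound_summable

lemma limit_hasSum :
    HasSum (fun p : ℕ × ℕ => 1/(24*((p.1:ℝ)+1)^2*((p.2:ℝ)+1)^2)) (Real.pi^4/864) := by
  have h := prod_hasSum.mul_left (1/24)
  have heq : (fun p : ℕ × ℕ => 1/24 * ((1/((p.1:ℝ)+1)^2) * (1/((p.2:ℝ)+1)^2)))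
      = fun p : ℕ × ℕ => 1/(24*((p.1:ℝ)+1)^2*((p.2:ℝ)+1)^2) := by
    funext p
    have : ((p.1:ℝ)+1) ≠ 0 := by positivity
    have : ((p.2:ℝ)+1) ≠ 0 := by positivity
    field_simp
  rw [heq] at h
  have e : Real.pi^4/864 = 1/24 * ((Real.pi^2/6) * (Real.pi^2/6)) := by ring
  rw [e]; exact h

/-- Total sum over heights. -/
noncomputable def Ttot (N : ℕ) : ℝ :=
  ∑ h₁ ∈ Finset.Icc 1 N, ∑ h₂ ∈ Finset.Icc 1 N, gsum h₁ h₂ N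

open Finset in
lemma Ttot_eq_tsum (N : ℕ) : Ttot N / (N:ℝ)^4 = ∑' p : ℕ × ℕ, fN N p := by
  rw [tsum_eq_sum (s := (range N) ×ˢ (range N)) ?_]
  · rw [Finset.sum_product]
    unfold Ttot
    rw [Finset.sum_div,
      show Finset.Icc 1 N = Finset.Ico 1 (N+1) from (Finset.Ico_add_one_right_eq_Icc 1 N).symm,
      Finset.sum_Ico_eq_sum_range]
    simp only [Nat.add_sub_cancel]
    refine Finset.sum_congr rfl fun i _ => ?_
    rw [Finset.sum_div, Finset.sum_Ico_eq_sum_range]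
    simp only [Nat.add_sub_cancel]
    refine Finset.sum_congr rfl fun j _ => ?_
    unfold fN
    rw [Nat.add_comm 1 i, Nat.add_comm 1 j]
  · intro p hp
    simp only [Finset.mem_product, Finset.mem_range, not_and_or, not_lt] at hp
    unfold fN
    rw [gsum_zero]
    · simp
    · omega

lemma Ttot_tendsto :
    Tendsto (fun N : ℕ => Ttot N / (N:ℝ)^4) atTop (nhds (Real.pi^4/864)) := by
  have key := tendsto_tsum_of_dominated_convergence
    (f := fN) (g := fun p : ℕ × ℕ => 1/(24*((p.1:ℝ)+1)^2*((p.2:ℝ)+1)^2))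
    (bound := fun p : ℕ × ℕ => (1/((p.1:ℝ)+1)^2) * (1/((p.2:ℝ)+1)^2))
    (𝓕 := atTop)
    bound_summable ?_ ?_
  · rw [limit_hasSum.tsum_eq] at key
    have : (fun N : ℕ => Ttot N / (N:ℝ)^4) = fun N => ∑' p, fN N p := by
      funext N; exact Ttot_eq_tsum N
    rw [this]
    exact key
  · intro p
    have h := gsum_tendsto (p.1+1) (p.2+1) (by omega) (by omega)
    have : (1:ℝ)/(24*((p.1+1:ℕ):ℝ)^2*((p.2+1:ℕ):ℝ)^2)
        = 1/(24*((p.1:ℝ)+1)^2*((p.2:ℝ)+1)^2) := by push_cast; ring_nf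
    rw [this] at h
    exact h
  · filter_upwards with N
    exact fun p => fN_norm_bound N p

/-- Diagonal contribution. -/
noncomputable def Dtot (N : ℕ) : ℝ :=
  ∑ h₁ ∈ Finset.Icc 1 N, ∑ h₂ ∈ Finset.Icc 1 N, ∑ a ∈ Finset.Icc 1 N,
    if a*h₁ + a*h₂ ≤ N then (a:ℝ)*a else 0

open Finset in
lemma count_bound (a N : ℕ) (ha : 1 ≤ a) :
    ∑ h ∈ Icc 1 N, (if a*h ≤ N then (a:ℝ) else 0) ≤ (N:ℝ) := by
  rw [← Finset.sum_filter]
  have hset : (Icc 1 N).filter (fun h => a*h ≤ N) = Icc 1 (N/a) := by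
    ext h
    simp only [Finset.mem_filter, Finset.mem_Icc]
    constructor
    · rintro ⟨⟨h1, _⟩, h3⟩
      rw [Nat.mul_comm] at h3
      exact ⟨h1, (Nat.le_div_iff_mul_le (by omega)).mpr h3⟩
    · rintro ⟨h1, h2⟩
      have h3 := (Nat.le_div_iff_mul_le (by omega : 0 < a)).mp h2
      have h4 : a*h ≤ N := by rw [Nat.mul_comm]; exact h3
      refine ⟨⟨h1, ?_⟩, h4⟩
      calc h ≤ a*h := Nat.le_mul_of_pos_left h (by omega)
        _ ≤ N := h4
  rw [hset, Finset.sum_const, Nat.card_Icc]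
  simp only [Nat.add_sub_cancel, nsmul_eq_mul]
  have : (N/a) * a ≤ N := Nat.div_mul_le_self N a
  exact_mod_cast this

open Finset in
lemma Dtot_nonneg (N : ℕ) : 0 ≤ Dtot N := by
  unfold Dtot
  apply Finset.sum_nonneg; intro _ _
  apply Finset.sum_nonneg; intro _ _
  apply Finset.sum_nonneg; intro _ _
  split <;> positivity

open Finset in
lemma Dtot_le (N : ℕ) : Dtot N ≤ (N:ℝ)^3 := by
  unfold Dtot
  rw [Finset.sum_congr rfl (fun h₁ _ => Finset.sum_comm (s := Icc 1 N) (t := Icc 1 N)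
    (f := fun h₂ a => if a*h₁ + a*h₂ ≤ N then (a:ℝ)*a else 0)), Finset.sum_comm]
  calc ∑ a ∈ Icc 1 N, ∑ h₁ ∈ Icc 1 N, ∑ h₂ ∈ Icc 1 N,
        (if a*h₁ + a*h₂ ≤ N then (a:ℝ)*a else 0)
      ≤ ∑ a ∈ Icc 1 N, (N:ℝ)^2 := by
        apply Finset.sum_le_sum
        intro a ha
        have ha1 : 1 ≤ a := (Finset.mem_Icc.mp ha).1
        have hsumnn : 0 ≤ ∑ h ∈ Icc 1 N, (if a*h ≤ N then (a:ℝ) else 0) := by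
          apply Finset.sum_nonneg
          intro _ _
          split <;> positivity
        calc ∑ h₁ ∈ Icc 1 N, ∑ h₂ ∈ Icc 1 N, (if a*h₁ + a*h₂ ≤ N then (a:ℝ)*a else 0)
            ≤ (∑ h₁ ∈ Icc 1 N, (if a*h₁ ≤ N then (a:ℝ) else 0)) *
              (∑ h₂ ∈ Icc 1 N, (if a*h₂ ≤ N then (a:ℝ) else 0)) := by
              rw [Finset.sum_mul_sum]
              apply Finset.sum_le_sum
              intro h₁ _
              apply Finset.sum_le_sum
              intro h₂ _
              by_cases hc : a*h₁ + a*h₂ ≤ N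
              · have hc2 : a*h₁ ≤ N ∧ a*h₂ ≤ N := by omega
                rw [if_pos hc, if_pos hc2.1, if_pos hc2.2]
              · rw [if_neg hc]
                apply mul_nonneg <;> (split <;> positivity)
          _ ≤ (N:ℝ) * (N:ℝ) :=
              mul_le_mul (count_bound a N ha1) (count_bound a N ha1) hsumnn
                (Nat.cast_nonneg N)
          _ = (N:ℝ)^2 := by ring
    _ = (N:ℝ) * (N:ℝ)^2 := by
        rw [Finset.sum_const, Nat.card_Icc]
        simp only [Nat.add_sub_cancel, nsmul_eq_mul]
    _ = (N:ℝ)^3 := by ring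

lemma Dtot_tendsto : Tendsto (fun N : ℕ => Dtot N / (N:ℝ)^4) atTop (nhds 0) := by
  refine tendsto_of_tendsto_of_tendsto_of_le_of_le' tendsto_const_nhds
    tendsto_one_div_atTop_nhds_zero_nat ?_ ?_
  · filter_upwards with N
    have := Dtot_nonneg N
    positivity
  · filter_upwards [eventually_ge_atTop 1] with N hN
    have hN0 : (0:ℝ) < N := by exact_mod_cast hN
    rw [div_le_iff₀ (by positivity)]
    calc Dtot N ≤ (N:ℝ)^3 := Dtot_le N
      _ = 1/(N:ℝ) * (N:ℝ)^4 := by field_simp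

/-- The part of the total sum with `a < b`. -/
noncomputable def Slt (N : ℕ) : ℝ :=
  ∑ h₁ ∈ Finset.Icc 1 N, ∑ h₂ ∈ Finset.Icc 1 N, ∑ a ∈ Finset.Icc 1 N,
    ∑ b ∈ Finset.Icc 1 N, if a < b ∧ a*h₁ + b*h₂ ≤ N then (a:ℝ)*b else 0

lemma ite_trichotomy (a b : ℕ) (C : Prop) [Decidable C] (w : ℝ) :
    (if C then w else 0) =
      (if a < b ∧ C then w else 0) + (if b < a ∧ C then w else 0)
        + (if a = b ∧ C then w else 0) := by
  rcases lt_trichotomy a b with h|h|h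
  · simp [h, h.ne, lt_asymm h]
  · simp [h, lt_irrefl]
  · simp [h, h.ne', lt_asymm h]

open Finset in
lemma Sgt_eq_Slt (N : ℕ) :
    (∑ h₁ ∈ Icc 1 N, ∑ h₂ ∈ Icc 1 N, ∑ a ∈ Icc 1 N, ∑ b ∈ Icc 1 N,
      if b < a ∧ a*h₁ + b*h₂ ≤ N then (a:ℝ)*b else 0) = Slt N := by
  unfold Slt
  rw [Finset.sum_comm]
  refine Finset.sum_congr rfl fun j _ => ?_
  refine Finset.sum_congr rfl fun i _ => ?_
  rw [Finset.sum_comm]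
  refine Finset.sum_congr rfl fun b _ => ?_
  refine Finset.sum_congr rfl fun a _ => ?_
  rw [Nat.add_comm (a*i) (b*j), mul_comm (a:ℝ) (b:ℝ)]

open Finset in
lemma Ttot_split (N : ℕ) : Ttot N = 2 * Slt N + Dtot N := by
  have step1 : Ttot N
      = ∑ h₁ ∈ Icc 1 N, ∑ h₂ ∈ Icc 1 N, ∑ a ∈ Icc 1 N, ∑ b ∈ Icc 1 N,
        ((if a < b ∧ a*h₁ + b*h₂ ≤ N then (a:ℝ)*b else 0)
          + (if b < a ∧ a*h₁ + b*h₂ ≤ N then (a:ℝ)*b else 0)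
          + (if a = b ∧ a*h₁ + b*h₂ ≤ N then (a:ℝ)*b else 0)) := by
    unfold Ttot gsum
    refine Finset.sum_congr rfl fun h₁ _ => Finset.sum_congr rfl fun h₂ _ =>
      Finset.sum_congr rfl fun a _ => Finset.sum_congr rfl fun b _ => ?_
    exact ite_trichotomy a b _ _
  have diag : ∀ h₁ h₂ : ℕ, ∀ a ∈ Icc 1 N,
      (∑ b ∈ Icc 1 N, if a = b ∧ a*h₁ + b*h₂ ≤ N then (a:ℝ)*b else 0)
        = (if a*h₁ + a*h₂ ≤ N then (a:ℝ)*a else 0) := by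
    intro h₁ h₂ a ha
    rw [Finset.sum_congr rfl (fun b _ => ite_and (a = b) (a*h₁ + b*h₂ ≤ N) ((a:ℝ)*b) 0),
      Finset.sum_ite_eq, if_pos ha]
  rw [step1]
  simp only [Finset.sum_add_distrib]
  rw [Sgt_eq_Slt]
  have hD : (∑ h₁ ∈ Icc 1 N, ∑ h₂ ∈ Icc 1 N, ∑ a ∈ Icc 1 N,
      ∑ b ∈ Icc 1 N, if a = b ∧ a*h₁ + b*h₂ ≤ N then (a:ℝ)*b else 0) = Dtot N := by
    unfold Dtot
    exact Finset.sum_congr rfl fun h₁ _ => Finset.sum_congr rfl fun h₂ _ =>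
      Finset.sum_congr rfl fun a ha => diag h₁ h₂ a ha
  rw [hD]
  unfold Slt
  ring

open Finset in
lemma sum4_swap (s t u v : Finset ℕ) (F : ℕ → ℕ → ℕ → ℕ → ℝ) :
    (∑ a ∈ s, ∑ b ∈ t, ∑ c ∈ u, ∑ d ∈ v, F a b c d)
      = ∑ c ∈ u, ∑ d ∈ v, ∑ a ∈ s, ∑ b ∈ t, F a b c d := by
  have h1 : ∀ a, (∑ b ∈ t, ∑ c ∈ u, ∑ d ∈ v, F a b c d)
      = ∑ c ∈ u, ∑ b ∈ t, ∑ d ∈ v, F a b c d := fun a => Finset.sum_comm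
  rw [Finset.sum_congr rfl fun a _ => h1 a, Finset.sum_comm]
  refine Finset.sum_congr rfl fun c _ => ?_
  have h2 : ∀ a, (∑ b ∈ t, ∑ d ∈ v, F a b c d)
      = ∑ d ∈ v, ∑ b ∈ t, F a b c d := fun a => Finset.sum_comm
  rw [Finset.sum_congr rfl fun a _ => h2 a, Finset.sum_comm]

open Finset in
lemma inner_reindex (N a h₁ h₂ : ℕ) (ha : 1 ≤ a) (H2 : 1 ≤ h₂) :
    (∑ l₂ ∈ Icc 1 N, if a*h₁ + (a+l₂)*h₂ ≤ N then (a:ℝ)*((a:ℝ)+(l₂:ℝ)) else 0)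
      = ∑ b ∈ Icc 1 N, if a < b ∧ a*h₁ + b*h₂ ≤ N then (a:ℝ)*b else 0 := by
  have lhs_eq : (∑ l₂ ∈ Icc 1 N, if a*h₁ + (a+l₂)*h₂ ≤ N then (a:ℝ)*((a:ℝ)+(l₂:ℝ)) else 0)
      = ∑ b ∈ Icc (a+1) (a+N), if a*h₁ + b*h₂ ≤ N then (a:ℝ)*(b:ℝ) else 0 := by
    rw [show Icc (a+1) (a+N) = Finset.map (addLeftEmbedding a) (Icc 1 N) from
      (Finset.map_add_left_Icc 1 N a).symm, Finset.sum_map]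
    refine Finset.sum_congr rfl fun l₂ _ => ?_
    simp only [addLeftEmbedding_apply]
    push_cast
    rfl
  rw [lhs_eq]
  have mid_eq : (∑ b ∈ Icc (a+1) (a+N), if a*h₁ + b*h₂ ≤ N then (a:ℝ)*(b:ℝ) else 0)
      = ∑ b ∈ Icc 1 (a+N), if a < b ∧ a*h₁ + b*h₂ ≤ N then (a:ℝ)*b else 0 := by
    rw [Finset.sum_congr rfl (fun b hb => ?_)]
    · apply Finset.sum_subset
      · apply Finset.Icc_subset_Icc_left
        omega
      · intro b _ hb2
        rw [if_neg]
        rintro ⟨hab, _⟩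
        simp only [Finset.mem_Icc] at *
        omega
    · have hab : a < b := by
        have := (Finset.mem_Icc.mp hb).1
        omega
      rw [if_congr (and_iff_right hab).symm rfl rfl]
  rw [mid_eq]
  symm
  apply Finset.sum_subset
  · apply Finset.Icc_subset_Icc_right
    omega
  · intro b hb hb2
    simp only [Finset.mem_Icc] at hb hb2
    rw [if_neg]
    rintro ⟨hab, hle⟩
    have : b ≤ b*h₂ := Nat.le_mul_of_pos_right b (by omega)
    omega

open Finset in
lemma S_eq (N : ℕ) :
    (∑ q ∈ (Finset.Icc 1 N ×ˢ Finset.Icc 1 N ×ˢ Finset.Icc 1 N ×ˢ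
          Finset.Icc 1 N).filter
        (fun q : ℕ × ℕ × ℕ × ℕ =>
          q.1 * q.2.2.1 + (q.1 + q.2.1) * q.2.2.2 ≤ N),
      (q.1 : ℝ) * ((q.1 : ℝ) + (q.2.1 : ℝ))) = Slt N := by
  rw [Finset.sum_filter]
  simp only [Finset.sum_product]
  refine Eq.trans (sum4_swap (Finset.Icc 1 N) (Finset.Icc 1 N) (Finset.Icc 1 N)
    (Finset.Icc 1 N) _) ?_
  unfold Slt
  refine Finset.sum_congr rfl fun h₁ _ => Finset.sum_congr rfl fun h₂ hh₂ =>
    Finset.sum_congr rfl fun a ha => ?_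
  exact inner_reindex N a h₁ h₂ (Finset.mem_Icc.mp ha).1 (Finset.mem_Icc.mp hh₂).1

/-- The normalized count `(1/N⁴) · ∑ ℓ₁·(ℓ₁+ℓ₂)`, summed over quadruples of positive
integers `(ℓ₁, ℓ₂, h₁, h₂)` with `ℓ₁·h₁ + (ℓ₁+ℓ₂)·h₂ ≤ N`, tends to
`(5/96)·ζ(4) = π⁴/1728` as `N → ∞`. -/
theorem two_cylinder_diagram_count_asymptotics :
    Tendsto (fun N : ℕ =>
        (1 / (N : ℝ) ^ 4) *
          ∑ q ∈ (Finset.Icc 1 N ×ˢ Finset.Icc 1 N ×ˢ Finset.Icc 1 N ×ˢ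
                Finset.Icc 1 N).filter
              (fun q : ℕ × ℕ × ℕ × ℕ =>
                q.1 * q.2.2.1 + (q.1 + q.2.1) * q.2.2.2 ≤ N),
            (q.1 : ℝ) * ((q.1 : ℝ) + (q.2.1 : ℝ)))
      atTop (nhds ((5 / 96) * zetaVal 4)) ∧
    (5 / 96 : ℝ) * zetaVal 4 = Real.pi ^ 4 / 1728 := by
  have hz : zetaVal 4 = Real.pi^4/90 := by
    unfold zetaVal
    have := zeta4_hasSum.tsum_eq
    rw [← this]
  constructor
  · have key : Tendsto (fun N : ℕ => (Ttot N/(N:ℝ)^4 - Dtot N/(N:ℝ)^4)/2) atTop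
        (nhds ((Real.pi^4/864 - 0)/2)) := (Ttot_tendsto.sub Dtot_tendsto).div_const 2
    have hval : (5/96 : ℝ) * zetaVal 4 = (Real.pi^4/864 - 0)/2 := by rw [hz]; ring
    rw [hval]
    refine key.congr fun N => ?_
    rw [eq_comm]
    have h2 : Slt N = (Ttot N - Dtot N)/2 := by rw [Ttot_split]; ring
    rw [S_eq N, h2]
    ring
  · rw [hz]; ring
end

section
/- The double zeta values satisfy 2 · ∑_{0<j<k} 1/(j·k³) + ∑_{0<j<k} 1/(j²·k²) = (5/4) · ζ(4), where both double series range over pairs of positive integers j < k and ζ(4) = ∑_{k≥1} 1/k⁴ = π⁴/90 (equality of real numbers). -/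
open Real

namespace DoubleZetaAux

/-- `ζ(1,3)` summand as a function on the full grid. -/
noncomputable def A (p : ℕ × ℕ) : ℝ :=
  if 0 < p.1 ∧ p.1 < p.2 then 1 / ((p.1 : ℝ) * (p.2 : ℝ) ^ 3) else 0

/-- `ζ(2,2)` summand as a function on the full grid. -/
noncomputable def B (p : ℕ × ℕ) : ℝ :=
  if 0 < p.1 ∧ p.1 < p.2 then 1 / ((p.1 : ℝ) ^ 2 * (p.2 : ℝ) ^ 2) else 0

/-- Full product summand. -/
noncomputable def F (p : ℕ × ℕ) : ℝ := (1 / (p.1 : ℝ) ^ 2) * (1 / (p.2 : ℝ) ^ 2)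

/-- Diagonal summand. -/
noncomputable def E (p : ℕ × ℕ) : ℝ := if p.1 = p.2 then 1 / (p.1 : ℝ) ^ 4 else 0

/-- Lower-triangle summand. -/
noncomputable def H (p : ℕ × ℕ) : ℝ :=
  if 0 < p.2 ∧ p.2 < p.1 then 1 / ((p.1 : ℝ) ^ 2 * (p.2 : ℝ) ^ 2) else 0

/-- Reindexing of the strict upper triangle by the full grid. -/
def ι (p : ℕ × ℕ) : ℕ × ℕ := (p.1 + 1, p.1 + p.2 + 2)

lemma ι_inj : Function.Injective ι := by
  rintro ⟨a, b⟩ ⟨c, d⟩ h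
  simp only [ι, Prod.mk.injEq] at h ⊢
  omega

lemma ι_range {p : ℕ × ℕ} (hp : p ∉ Set.range ι) : ¬(0 < p.1 ∧ p.1 < p.2) := by
  rintro ⟨h1, h2⟩
  exact hp ⟨(p.1 - 1, p.2 - p.1 - 1), by simp only [ι, Prod.ext_iff]; omega⟩

lemma A_off {p : ℕ × ℕ} (hp : p ∉ Set.range ι) : A p = 0 := by
  simp [A, ι_range hp]

lemma B_off {p : ℕ × ℕ} (hp : p ∉ Set.range ι) : B p = 0 := by
  simp [B, ι_range hp]

end DoubleZetaAux

set_option maxHeartbeats 2000000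
open DoubleZetaAux in
/-- The double zeta values satisfy `2·ζ(1,3) + ζ(2,2) = (5/4)·ζ(4)`, where
`ζ(1,3) = ∑_{0<j<k} 1/(j·k³)` and `ζ(2,2) = ∑_{0<j<k} 1/(j²·k²)`. -/
theorem double_zeta_identity :
    2 * (∑' p : {q : ℕ × ℕ // 0 < q.1 ∧ q.1 < q.2},
          (1 : ℝ) / ((p.1.1 : ℝ) * (p.1.2 : ℝ) ^ 3)) +
      (∑' p : {q : ℕ × ℕ // 0 < q.1 ∧ q.1 < q.2},
          (1 : ℝ) / ((p.1.1 : ℝ) ^ 2 * (p.1.2 : ℝ) ^ 2)) =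
    (5 / 4) * zetaVal 4 := by
  have h2 : HasSum (fun n : ℕ => (1 : ℝ) / (n : ℝ) ^ 2) (π ^ 2 / 6) := hasSum_zeta_two
  have h4 : HasSum (fun n : ℕ => (1 : ℝ) / (n : ℝ) ^ 4) (π ^ 4 / 90) := hasSum_zeta_four
  -- Summability of the full grid function
  have hFs : Summable F :=
    h2.summable.mul_of_nonneg h2.summable (fun n => by positivity) (fun n => by positivity)
  have hF : HasSum F (π ^ 2 / 6 * (π ^ 2 / 6)) := h2.mul h2 hFs
  -- Summability of B and A by comparison
  have hBle : ∀ p, B p ≤ F p := by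
    intro p
    unfold B F
    split
    · exact le_of_eq (by rw [div_mul_div_comm, one_mul])
    · positivity
  have hBnn : ∀ p, 0 ≤ B p := by intro p; unfold B; split <;> positivity
  have hAnn : ∀ p, 0 ≤ A p := by intro p; unfold A; split <;> positivity
  have hBs : Summable B := hFs.of_nonneg_of_le hBnn hBle
  have hAs : Summable A := by
    refine hBs.of_nonneg_of_le hAnn ?_
    intro p
    unfold A B
    split
    · rename_i h
      obtain ⟨h1, h2'⟩ := h
      have hj : (1 : ℝ) ≤ (p.1 : ℝ) := by exact_mod_cast h1
      have hjk : (p.1 : ℝ) ≤ (p.2 : ℝ) := by exact_mod_cast h2'.le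
      have hjpos : (0 : ℝ) < (p.1 : ℝ) := by linarith
      have hkpos : (0 : ℝ) < (p.2 : ℝ) := by linarith
      apply one_div_le_one_div_of_le (by positivity)
      calc (p.1 : ℝ) ^ 2 * (p.2 : ℝ) ^ 2
          = ((p.1 : ℝ) * (p.2 : ℝ) ^ 2) * (p.1 : ℝ) := by ring
        _ ≤ ((p.1 : ℝ) * (p.2 : ℝ) ^ 2) * (p.2 : ℝ) := by
            apply mul_le_mul_of_nonneg_left hjk (by positivity)
        _ = (p.1 : ℝ) * (p.2 : ℝ) ^ 3 := by ring
    · exact le_refl 0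
  set a := ∑' p, A p with ha_def
  set b := ∑' p, B p with hb_def
  have hA : HasSum A a := hAs.hasSum
  have hB : HasSum B b := hBs.hasSum
  -- Diagonal has sum π⁴/90
  have hE : HasSum E (π ^ 4 / 90) := by
    have hinj : Function.Injective (fun n : ℕ => ((n, n) : ℕ × ℕ)) := by
      intro m n h; simpa [Prod.ext_iff] using h
    rw [← hinj.hasSum_iff (f := E)]
    · have : (E ∘ fun n : ℕ => ((n, n) : ℕ × ℕ)) = fun n : ℕ => (1 : ℝ) / (n : ℝ) ^ 4 := by
        funext n; simp [E]
      rw [this]; exact h4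
    · rintro ⟨x, y⟩ hxy
      have : x ≠ y := by
        intro h; exact hxy ⟨x, by simp [h]⟩
      simp [E, this]
  -- Lower triangle has same sum as B
  have hH : HasSum H b := by
    have := (Equiv.prodComm ℕ ℕ).hasSum_iff (f := H) (a := b)
    rw [← this]
    have : (H ∘ (Equiv.prodComm ℕ ℕ)) = B := by
      funext p
      simp only [Function.comp_apply, Equiv.prodComm_apply, H, B, Prod.fst_swap, Prod.snd_swap]
      ring_nf
    rw [this]; exact hB
  -- Pointwise decomposition F = B + E + H
  have hFdec : F = fun p => B p + E p + H p := by
    funext p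
    rcases p with ⟨j, k⟩
    simp only [F, B, E, H]
    rcases Nat.lt_trichotomy j k with h | h | h
    · rw [if_neg (by omega : ¬ j = k), if_neg (by omega : ¬(0 < k ∧ k < j)),
        add_zero, add_zero]
      rcases Nat.eq_zero_or_pos j with hj | hj
      · subst hj
        rw [if_neg (by omega)]
        simp
      · rw [if_pos ⟨hj, h⟩, div_mul_div_comm, one_mul]
    · subst h
      rw [if_neg (by omega : ¬(0 < j ∧ j < j)), if_pos rfl, zero_add, add_zero,
        div_mul_div_comm, one_mul, ← pow_add]
    · rw [if_neg (by omega : ¬(0 < j ∧ j < k)), if_neg (by omega : ¬ j = k),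
        zero_add, zero_add]
      rcases Nat.eq_zero_or_pos k with hk | hk
      · subst hk
        rw [if_neg (by omega)]
        simp
      · rw [if_pos ⟨hk, h⟩, div_mul_div_comm, one_mul]
  have key1 : π ^ 2 / 6 * (π ^ 2 / 6) = b + π ^ 4 / 90 + b := by
    have : HasSum F (b + π ^ 4 / 90 + b) := by
      rw [hFdec]; exact (hB.add hE).add hH
    exact hF.unique this
  -- Reindexed sums
  have hAι : HasSum (A ∘ ι) a := (ι_inj.hasSum_iff (fun p hp => A_off hp)).2 hA
  have hBι : HasSum (B ∘ ι) b := (ι_inj.hasSum_iff (fun p hp => B_off hp)).2 hB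
  have hCι : HasSum ((A ∘ ι) ∘ (Equiv.prodComm ℕ ℕ)) a :=
    ((Equiv.prodComm ℕ ℕ).hasSum_iff).2 hAι
  have hDι : HasSum ((B ∘ ι) ∘ (Equiv.prodComm ℕ ℕ)) b :=
    ((Equiv.prodComm ℕ ℕ).hasSum_iff).2 hBι
  -- F restricted to the positive quadrant, reindexed
  have hρinj : Function.Injective (fun p : ℕ × ℕ => (p.1 + 1, p.2 + 1)) := by
    rintro ⟨x, y⟩ ⟨z, w⟩ h
    simpa [Prod.ext_iff] using h
  have hFρ : HasSum (F ∘ fun p : ℕ × ℕ => (p.1 + 1, p.2 + 1)) (π ^ 2 / 6 * (π ^ 2 / 6)) := by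
    refine (hρinj.hasSum_iff ?_).2 hF
    rintro ⟨x, y⟩ hxy
    have : x = 0 ∨ y = 0 := by
      by_contra hc
      push_neg at hc
      exact hxy ⟨(x - 1, y - 1), by simp [Prod.ext_iff]; omega⟩
    rcases this with h | h <;> simp [F, h]
  -- The partial-fraction identity, pointwise
  have hpf : (F ∘ fun p : ℕ × ℕ => (p.1 + 1, p.2 + 1)) =
      fun p => (B ∘ ι) p + ((B ∘ ι) ∘ (Equiv.prodComm ℕ ℕ)) p +
        ((A ∘ ι) p + (A ∘ ι) p) + (((A ∘ ι) ∘ (Equiv.prodComm ℕ ℕ)) p +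
          ((A ∘ ι) ∘ (Equiv.prodComm ℕ ℕ)) p) := by
    funext p
    rcases p with ⟨j, m⟩
    simp only [Function.comp_apply, Equiv.prodComm_apply, Prod.fst_swap, Prod.snd_swap,
      F, A, B, ι]
    erw [if_pos (show 0 < j + 1 ∧ j + 1 < j + m + 2 by omega),
      if_pos (show 0 < m + 1 ∧ m + 1 < m + j + 2 by omega),
      if_pos (show 0 < j + 1 ∧ j + 1 < j + m + 2 by omega),
      if_pos (show 0 < m + 1 ∧ m + 1 < m + j + 2 by omega)]
    have hj : (0 : ℝ) < (j : ℝ) + 1 := by positivity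
    have hm : (0 : ℝ) < (m : ℝ) + 1 := by positivity
    have hn : (0 : ℝ) < (j : ℝ) + (m : ℝ) + 2 := by positivity
    push_cast
    have hj' : ((j : ℝ) + 1) ≠ 0 := by positivity
    have hm' : ((m : ℝ) + 1) ≠ 0 := by positivity
    have hn1 : ((j : ℝ) + (m : ℝ) + 2) ≠ 0 := by positivity
    have hn2 : ((m : ℝ) + (j : ℝ) + 2) ≠ 0 := by positivity
    field_simp
    ring
  have key2 : π ^ 2 / 6 * (π ^ 2 / 6) = b + b + (a + a) + (a + a) := by
    refine hFρ.unique ?_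
    rw [hpf]
    exact ((hBι.add hDι).add (hAι.add hAι)).add (hCι.add hCι)
  -- Identify the goal's tsums with a and b
  have hgoalA : (∑' p : {q : ℕ × ℕ // 0 < q.1 ∧ q.1 < q.2},
      (1 : ℝ) / ((p.1.1 : ℝ) * (p.1.2 : ℝ) ^ 3)) = a := by
    rw [ha_def]
    refine (tsum_subtype {q : ℕ × ℕ | 0 < q.1 ∧ q.1 < q.2}
      (fun p : ℕ × ℕ => (1 : ℝ) / ((p.1 : ℝ) * (p.2 : ℝ) ^ 3))).trans ?_
    apply tsum_congr
    intro p
    simp only [Set.indicator_apply, Set.mem_setOf_eq, A]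
  have hgoalB : (∑' p : {q : ℕ × ℕ // 0 < q.1 ∧ q.1 < q.2},
      (1 : ℝ) / ((p.1.1 : ℝ) ^ 2 * (p.1.2 : ℝ) ^ 2)) = b := by
    rw [hb_def]
    refine (tsum_subtype {q : ℕ × ℕ | 0 < q.1 ∧ q.1 < q.2}
      (fun p : ℕ × ℕ => (1 : ℝ) / ((p.1 : ℝ) ^ 2 * (p.2 : ℝ) ^ 2))).trans ?_
    apply tsum_congr
    intro p
    simp only [Set.indicator_apply, Set.mem_setOf_eq, B]
  -- Evaluate zetaVal 4
  have hzeta : zetaVal 4 = π ^ 4 / 90 := by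
    rw [zetaVal, ← h4.tsum_eq, Summable.tsum_eq_zero_add h4.summable]
    push_cast
    simp
  rw [hgoalA, hgoalB, hzeta]
  have hpi : π ^ 2 / 6 * (π ^ 2 / 6) = π ^ 4 / 36 := by ring
  rw [hpi] at key1 key2
  linarith
end

section
/- For all natural numbers a ≥ 0 and b ≥ 0, setting d = a + b + 3, the normalized count (1/N^d) · ∑_{(W,H) ∈ ℕ₊², W·H ≤ 2N} W · ∑_{w₂=1}^{⌊W/2⌋} (W/2 − w₂)^a · w₂^b tends to (4 · a! · b! / (a+b+1)!) · ζ(d)/d as the natural number N tends to infinity, where W/2 − w₂ is computed in ℝ and ζ(d) = ∑_{k≥1} 1/k^d. -/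
open Filter

open Finset Topology

noncomputable def Pm (m n : ℕ) : ℝ := ∑ w ∈ Finset.Icc 1 n, (w : ℝ) ^ m

lemma key_ub {x y : ℝ} (hy : 0 ≤ y) (h : y ≤ x) (m : ℕ) :
    x ^ (m + 1) - y ^ (m + 1) ≤ (m + 1) * x ^ m * (x - y) := by
  have hx : 0 ≤ x := hy.trans h
  have hg := geom_sum₂_mul x y (m + 1)
  rw [← hg]
  have hsum : (∑ i ∈ range (m + 1), x ^ i * y ^ (m + 1 - 1 - i)) ≤ (m + 1) * x ^ m := by
    calc (∑ i ∈ range (m + 1), x ^ i * y ^ (m + 1 - 1 - i))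
        ≤ ∑ i ∈ range (m + 1), x ^ m := by
          apply Finset.sum_le_sum
          intro i hi
          have him : i ≤ m := Nat.lt_succ_iff.mp (Finset.mem_range.mp hi)
          calc x ^ i * y ^ (m + 1 - 1 - i) ≤ x ^ i * x ^ (m + 1 - 1 - i) := by
                apply mul_le_mul_of_nonneg_left (pow_le_pow_left₀ hy h _) (pow_nonneg hx i)
            _ = x ^ m := by rw [← pow_add]; congr 1; omega
      _ = (m + 1) * x ^ m := by simp [Finset.sum_const, nsmul_eq_mul]
  have hxy : 0 ≤ x - y := sub_nonneg.mpr h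
  calc (∑ i ∈ range (m + 1), x ^ i * y ^ (m + 1 - 1 - i)) * (x - y)
      ≤ ((m + 1) * x ^ m) * (x - y) := mul_le_mul_of_nonneg_right hsum hxy
    _ = (m + 1) * x ^ m * (x - y) := by ring

lemma key_lb {x y : ℝ} (hy : 0 ≤ y) (h : y ≤ x) (m : ℕ) :
    (m + 1) * y ^ m * (x - y) ≤ x ^ (m + 1) - y ^ (m + 1) := by
  have hg := geom_sum₂_mul x y (m + 1)
  rw [← hg]
  have hsum : (m + 1) * y ^ m ≤ (∑ i ∈ range (m + 1), x ^ i * y ^ (m + 1 - 1 - i)) := by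
    calc ((m : ℝ) + 1) * y ^ m = ∑ _i ∈ range (m + 1), y ^ m := by
          simp [Finset.sum_const, nsmul_eq_mul]
      _ ≤ ∑ i ∈ range (m + 1), x ^ i * y ^ (m + 1 - 1 - i) := by
          apply Finset.sum_le_sum
          intro i hi
          have him : i ≤ m := Nat.lt_succ_iff.mp (Finset.mem_range.mp hi)
          calc y ^ m = y ^ i * y ^ (m + 1 - 1 - i) := by rw [← pow_add]; congr 1; omega
            _ ≤ x ^ i * y ^ (m + 1 - 1 - i) := by
                apply mul_le_mul_of_nonneg_right (pow_le_pow_left₀ hy h _) (pow_nonneg hy _)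
  have hxy : 0 ≤ x - y := sub_nonneg.mpr h
  exact mul_le_mul_of_nonneg_right hsum hxy

lemma sum_pow_lb (m n : ℕ) : (n : ℝ) ^ (m + 1) ≤ ((m : ℝ) + 1) * Pm m n := by
  induction n with
  | zero => simp [Pm]
  | succ n ih =>
    have hstep := key_ub (x := ((n : ℝ) + 1)) (y := (n : ℝ)) (Nat.cast_nonneg n)
      (by linarith) m
    have hPm : Pm m (n + 1) = Pm m n + ((n : ℝ) + 1) ^ m := by
      rw [Pm, Pm, Finset.sum_Icc_succ_top (by omega)]
      push_cast; ring
    rw [hPm]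
    push_cast
    push_cast at ih
    nlinarith [hstep, ih]

lemma sum_pow_ub (m n : ℕ) : ((m : ℝ) + 1) * Pm m n ≤ ((n : ℝ) + 1) ^ (m + 1) := by
  induction n with
  | zero =>
    rw [Pm, show Finset.Icc 1 0 = (∅ : Finset ℕ) by simp]
    simp
  | succ n ih =>
    have hstep := key_lb (x := ((n : ℝ) + 2)) (y := ((n : ℝ) + 1)) (by positivity)
      (by linarith) m
    have hPm : Pm m (n + 1) = Pm m n + ((n : ℝ) + 1) ^ m := by
      rw [Pm, Pm, Finset.sum_Icc_succ_top (by omega)]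
      push_cast; ring
    rw [hPm]
    push_cast
    have e : ((n:ℝ) + 1 + 1) = (n:ℝ) + 2 := by ring
    rw [e]
    nlinarith [hstep, ih]

lemma tendsto_succ_div_self : Tendsto (fun n : ℕ => ((n : ℝ) + 1) / n) atTop (𝓝 1) := by
  have h : Tendsto (fun n : ℕ => 1 + 1 / (n : ℝ)) atTop (𝓝 1) := by
    simpa using (tendsto_const_nhds (x := (1:ℝ))).add tendsto_one_div_atTop_nhds_zero_nat
  apply h.congr'
  filter_upwards [eventually_ge_atTop 1] with n hn
  have : (n : ℝ) ≠ 0 := Nat.cast_ne_zero.mpr (by omega)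
  field_simp

lemma tendsto_sum_pow (m : ℕ) :
    Tendsto (fun n : ℕ => Pm m n / (n : ℝ) ^ (m + 1)) atTop (𝓝 (1 / ((m : ℝ) + 1))) := by
  have hub : Tendsto (fun n : ℕ => (((n : ℝ) + 1) / n) ^ (m + 1) / ((m : ℝ) + 1)) atTop
      (𝓝 (1 / ((m : ℝ) + 1))) := by
    simpa using (tendsto_succ_div_self.pow (m + 1)).div_const ((m : ℝ) + 1)
  apply tendsto_of_tendsto_of_tendsto_of_le_of_le' tendsto_const_nhds hub
  · filter_upwards [eventually_ge_atTop 1] with n hn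
    have hn0 : (0 : ℝ) < (n : ℝ) := by exact_mod_cast Nat.pos_of_ne_zero (by omega)
    have hm0 : (0 : ℝ) < (m : ℝ) + 1 := by positivity
    rw [div_le_div_iff₀ hm0 (by positivity)]
    nlinarith [sum_pow_lb m n]
  · filter_upwards [eventually_ge_atTop 1] with n hn
    have hn0 : (0 : ℝ) < (n : ℝ) := by exact_mod_cast Nat.pos_of_ne_zero (by omega)
    have hm0 : (0 : ℝ) < (m : ℝ) + 1 := by positivity
    rw [div_pow, div_div, div_le_div_iff₀ (by positivity) (by positivity)]
    have h := sum_pow_ub m n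
    have hPm0 : 0 ≤ Pm m n := Finset.sum_nonneg (fun w _ => by positivity)
    nlinarith [pow_pos hn0 (m+1)]

lemma Pm_def (m n : ℕ) : Pm m n = ∑ w ∈ Finset.Icc 1 n, (w : ℝ) ^ m := rfl

lemma stolz {u : ℕ → ℝ} {c : ℝ} {m : ℕ}
    (h : Tendsto (fun n : ℕ => u n / (n : ℝ) ^ m) atTop (𝓝 c)) :
    Tendsto (fun n : ℕ => (∑ w ∈ Finset.Icc 1 n, u w) / (n : ℝ) ^ (m + 1)) atTop
      (𝓝 (c / ((m : ℝ) + 1))) := by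
  set δ : ℕ → ℝ := fun n => |u n / (n : ℝ) ^ m - c| with hδdef
  have hδ : Tendsto δ atTop (𝓝 0) := by
    have := (h.sub_const c).abs
    simpa using this
  have hces : Tendsto (fun n : ℕ => ((n : ℝ))⁻¹ * ∑ i ∈ range n, δ i) atTop (𝓝 0) := hδ.cesaro
  have hces' : Tendsto (fun n : ℕ => (((n : ℝ) + 1))⁻¹ * ∑ i ∈ range (n + 1), δ i) atTop (𝓝 0) := by
    have h2 := hces.comp (tendsto_add_atTop_nat 1)
    refine h2.congr fun n => ?_
    simp only [Function.comp]
    push_cast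
    ring_nf
  have hbound : Tendsto (fun n : ℕ => (((n : ℝ) + 1) / n) * ((((n : ℝ) + 1))⁻¹ * ∑ i ∈ range (n + 1), δ i))
      atTop (𝓝 0) := by
    have h1 : Tendsto (fun n : ℕ => ((n : ℝ) + 1) / n) atTop (𝓝 1) := by
      have h2 : Tendsto (fun n : ℕ => 1 + 1 / (n : ℝ)) atTop (𝓝 1) := by
        simpa using (tendsto_const_nhds (x := (1:ℝ))).add tendsto_one_div_atTop_nhds_zero_nat
      apply h2.congr'
      filter_upwards [eventually_ge_atTop 1] with n hn
      have : (n : ℝ) ≠ 0 := Nat.cast_ne_zero.mpr (by omega)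
      field_simp
    simpa using h1.mul hces'
  have hrem : Tendsto (fun n : ℕ => (∑ w ∈ Finset.Icc 1 n, (u w - c * (w : ℝ) ^ m)) / (n : ℝ) ^ (m + 1))
      atTop (𝓝 0) := by
    apply squeeze_zero_norm' ?_ hbound
    filter_upwards [eventually_ge_atTop 1] with n hn
    have hn0 : (0 : ℝ) < (n : ℝ) := by exact_mod_cast Nat.pos_of_ne_zero (by omega)
    have hterm : ∀ w ∈ Finset.Icc 1 n, |u w - c * (w : ℝ) ^ m| ≤ δ w * (n : ℝ) ^ m := by
      intro w hw
      rw [Finset.mem_Icc] at hw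
      have hw0 : (0 : ℝ) < (w : ℝ) := by exact_mod_cast Nat.pos_of_ne_zero (by omega)
      have hwm : (0 : ℝ) < (w : ℝ) ^ m := by positivity
      have he : u w - c * (w : ℝ) ^ m = (u w / (w : ℝ) ^ m - c) * (w : ℝ) ^ m := by
        field_simp
      rw [he, abs_mul, abs_of_pos hwm]
      have hwn : (w : ℝ) ^ m ≤ (n : ℝ) ^ m := by
        apply pow_le_pow_left₀ hw0.le
        exact_mod_cast hw.2
      exact mul_le_mul_of_nonneg_left hwn (abs_nonneg _)
    have hsum : |∑ w ∈ Finset.Icc 1 n, (u w - c * (w : ℝ) ^ m)| ≤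
        (∑ w ∈ Finset.Icc 1 n, δ w) * (n : ℝ) ^ m := by
      calc |∑ w ∈ Finset.Icc 1 n, (u w - c * (w : ℝ) ^ m)|
          ≤ ∑ w ∈ Finset.Icc 1 n, |u w - c * (w : ℝ) ^ m| := Finset.abs_sum_le_sum_abs _ _
        _ ≤ ∑ w ∈ Finset.Icc 1 n, δ w * (n : ℝ) ^ m := Finset.sum_le_sum hterm
        _ = (∑ w ∈ Finset.Icc 1 n, δ w) * (n : ℝ) ^ m := by rw [← Finset.sum_mul]
    have hsub : (∑ w ∈ Finset.Icc 1 n, δ w) ≤ ∑ i ∈ range (n + 1), δ i := by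
      apply Finset.sum_le_sum_of_subset_of_nonneg
      · intro x hx
        rw [Finset.mem_Icc] at hx
        exact Finset.mem_range.mpr (by omega)
      · intro i _ _; exact abs_nonneg _
    rw [Real.norm_eq_abs, abs_div, abs_of_pos (by positivity : (0:ℝ) < (n:ℝ) ^ (m+1))]
    rw [div_le_iff₀ (by positivity : (0:ℝ) < (n:ℝ) ^ (m+1))]
    have hrhs : (((n : ℝ) + 1) / n) * ((((n : ℝ) + 1))⁻¹ * ∑ i ∈ range (n + 1), δ i) * (n : ℝ) ^ (m + 1)
        = (∑ i ∈ range (n + 1), δ i) * (n : ℝ) ^ m := by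
      have hn1 : ((n : ℝ) + 1) ≠ 0 := by positivity
      field_simp
      ring
    rw [hrhs]
    calc |∑ w ∈ Finset.Icc 1 n, (u w - c * (w : ℝ) ^ m)|
        ≤ (∑ w ∈ Finset.Icc 1 n, δ w) * (n : ℝ) ^ m := hsum
      _ ≤ (∑ i ∈ range (n + 1), δ i) * (n : ℝ) ^ m :=
          mul_le_mul_of_nonneg_right hsub (by positivity)
  have hmain : Tendsto (fun n : ℕ =>
      (∑ w ∈ Finset.Icc 1 n, (u w - c * (w : ℝ) ^ m)) / (n : ℝ) ^ (m + 1)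
        + c * (Pm m n / (n : ℝ) ^ (m + 1))) atTop (𝓝 (0 + c * (1 / ((m : ℝ) + 1)))) :=
    hrem.add ((tendsto_sum_pow m).const_mul c)
  have heq : ∀ n : ℕ,
      (∑ w ∈ Finset.Icc 1 n, (u w - c * (w : ℝ) ^ m)) / (n : ℝ) ^ (m + 1)
        + c * (Pm m n / (n : ℝ) ^ (m + 1)) = (∑ w ∈ Finset.Icc 1 n, u w) / (n : ℝ) ^ (m + 1) := by
    intro n
    have hc : c * (Pm m n / (n : ℝ) ^ (m + 1)) =
        (∑ w ∈ Finset.Icc 1 n, c * (w : ℝ) ^ m) / (n : ℝ) ^ (m + 1) := by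
      rw [Pm_def, ← mul_div_assoc, Finset.mul_sum]
    rw [hc, ← add_div, ← Finset.sum_add_distrib]
    congr 1
    apply Finset.sum_congr rfl
    intro w _
    ring
  have : (0 : ℝ) + c * (1 / ((m : ℝ) + 1)) = c / ((m : ℝ) + 1) := by ring
  rw [this] at hmain
  exact hmain.congr heq

lemma tendsto_comp_div {g : ℕ → ℝ} {k : ℕ} {L q : ℝ} (r : ℕ → ℕ)
    (hg : Tendsto (fun n : ℕ => g n / (n : ℝ) ^ k) atTop (𝓝 L))
    (hr : Tendsto r atTop atTop)
    (hq : Tendsto (fun n : ℕ => ((r n : ℕ) : ℝ) / n) atTop (𝓝 q)) :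
    Tendsto (fun n : ℕ => g (r n) / (n : ℝ) ^ k) atTop (𝓝 (L * q ^ k)) := by
  have h1 : Tendsto (fun n : ℕ => g (r n) / ((r n : ℕ) : ℝ) ^ k * (((r n : ℕ) : ℝ) / n) ^ k)
      atTop (𝓝 (L * q ^ k)) := (hg.comp hr).mul (hq.pow k)
  apply h1.congr'
  filter_upwards [hr.eventually_ge_atTop 1, eventually_ge_atTop 1] with n h1 h2
  have hr0 : ((r n : ℕ) : ℝ) ≠ 0 := Nat.cast_ne_zero.mpr (by omega)
  have hn0 : (n : ℝ) ≠ 0 := Nat.cast_ne_zero.mpr (by omega)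
  rw [div_pow]
  field_simp

lemma nat_div_tendsto_atTop {s h : ℕ} (hs : 0 < s) (hh : 0 < h) :
    Tendsto (fun N : ℕ => s * N / h) atTop atTop := by
  apply tendsto_atTop_atTop.mpr
  intro b
  refine ⟨b * h, fun N hN => ?_⟩
  rw [Nat.le_div_iff_mul_le hh]
  calc b * h ≤ N := hN
    _ ≤ s * N := Nat.le_mul_of_pos_left N hs

lemma nat_div_cast_tendsto (s : ℕ) {h : ℕ} (hh : 0 < h) :
    Tendsto (fun N : ℕ => ((s * N / h : ℕ) : ℝ) / N) atTop (𝓝 ((s : ℝ) / h)) := by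
  have hlow : Tendsto (fun N : ℕ => (s : ℝ) / h - 1 / N) atTop (𝓝 ((s : ℝ) / h)) := by
    simpa using (tendsto_const_nhds (x := (s:ℝ)/h)).sub tendsto_one_div_atTop_nhds_zero_nat
  apply tendsto_of_tendsto_of_tendsto_of_le_of_le' hlow tendsto_const_nhds
  · filter_upwards [eventually_ge_atTop 1] with N hN
    have hN0 : (0 : ℝ) < (N : ℝ) := by exact_mod_cast Nat.pos_of_ne_zero (by omega)
    have hh0 : (0 : ℝ) < (h : ℝ) := by exact_mod_cast hh
    have hkey : s * N < (s * N / h + 1) * h := by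
      have h1 := Nat.div_add_mod (s * N) h
      have h2 := Nat.mod_lt (s * N) hh
      calc s * N = h * (s * N / h) + (s * N) % h := h1.symm
        _ < h * (s * N / h) + h := by omega
        _ = (s * N / h + 1) * h := by ring
    have hkeyR : (s : ℝ) * N < ((s * N / h : ℕ) : ℝ) * h + h := by
      have := (Nat.cast_lt (α := ℝ)).mpr hkey
      push_cast at this
      linarith
    have hQ : (s : ℝ) * N / h - 1 ≤ ((s * N / h : ℕ) : ℝ) := by
      have hlt : (s : ℝ) * N / h < ((s * N / h : ℕ) : ℝ) + 1 := by
        rw [div_lt_iff₀ hh0]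
        nlinarith
      linarith
    have e : (s : ℝ) / h - 1 / N = ((s : ℝ) * N / h - 1) / N := by
      field_simp
    rw [e]
    gcongr
  · filter_upwards [eventually_ge_atTop 1] with N hN
    have hN0 : (0 : ℝ) < (N : ℝ) := by exact_mod_cast Nat.pos_of_ne_zero (by omega)
    have hh0 : (0 : ℝ) < (h : ℝ) := by exact_mod_cast hh
    have hkey : ((s * N / h : ℕ) : ℝ) * h ≤ (s : ℝ) * N := by
      have := Nat.div_mul_le_self (s * N) h
      exact_mod_cast this
    rw [div_le_div_iff₀ hN0 hh0]
    nlinarith [hkey]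

noncomputable def Jv (a b : ℕ) : ℝ :=
  ∑ i ∈ Finset.range (a + 1), (-1 : ℝ) ^ i * (a.choose i : ℝ) / ((b : ℝ) + i + 1)

lemma Jv_succ (a b : ℕ) : Jv (a + 1) b = Jv a b - Jv a (b + 1) := by
  set g : ℕ → ℝ := fun j => (-1 : ℝ) ^ j * (a.choose j : ℝ) / ((b : ℝ) + j + 1) with hg
  have hJab : Jv a b = ∑ j ∈ range (a + 1), g j := rfl
  have e1 : ∑ j ∈ range (a + 2), g j = (∑ i ∈ range (a + 1), g (i + 1)) + g 0 :=
    Finset.sum_range_succ' g (a + 1)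
  have e2 : ∑ j ∈ range (a + 2), g j = (∑ j ∈ range (a + 1), g j) + g (a + 1) :=
    Finset.sum_range_succ g (a + 1)
  have hga : g (a + 1) = 0 := by
    simp [hg, Nat.choose_succ_self]
  have hA : (∑ i ∈ range (a + 1), g (i + 1)) = Jv a b - g 0 := by
    rw [hJab]; rw [e2, hga] at e1; linarith
  have hsplit : Jv (a + 1) b =
      (∑ i ∈ range (a + 1),
        (-1 : ℝ) ^ (i + 1) * (((a + 1).choose (i + 1) : ℕ) : ℝ) / ((b : ℝ) + (↑(i + 1) : ℝ) + 1))
      + (-1 : ℝ) ^ 0 * (((a + 1).choose 0 : ℕ) : ℝ) / ((b : ℝ) + (0 : ℕ) + 1) := by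
    rw [Jv]
    exact Finset.sum_range_succ' _ (a + 1)
  have hterm : ∀ i ∈ range (a + 1),
      (-1 : ℝ) ^ (i + 1) * (((a + 1).choose (i + 1) : ℕ) : ℝ) / ((b : ℝ) + (↑(i + 1) : ℝ) + 1)
      = -((-1 : ℝ) ^ i * (a.choose i : ℝ) / (((b + 1 : ℕ) : ℝ) + i + 1)) + g (i + 1) := by
    intro i _
    rw [Nat.choose_succ_succ]
    simp only [hg]
    push_cast
    have hne : (b : ℝ) + i + 2 ≠ 0 := by positivity
    field_simp
    ring
  have hJb1 : Jv a (b + 1) = ∑ i ∈ range (a + 1),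
      (-1 : ℝ) ^ i * (a.choose i : ℝ) / (((b + 1 : ℕ) : ℝ) + i + 1) := rfl
  rw [hsplit, Finset.sum_congr rfl hterm, Finset.sum_add_distrib, Finset.sum_neg_distrib, hA]
  rw [← hJb1]
  have hg0 : g 0 = 1 / ((b : ℝ) + 1) := by simp [hg]
  have : (-1 : ℝ) ^ 0 * (((a + 1).choose 0 : ℕ) : ℝ) / ((b : ℝ) + (0 : ℕ) + 1) = 1 / ((b : ℝ) + 1) := by
    simp
  rw [this, hg0]
  ring

lemma Jv_eq (a b : ℕ) :
    Jv a b = (a.factorial : ℝ) * (b.factorial : ℝ) / ((a + b + 1).factorial : ℝ) := by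
  induction a generalizing b with
  | zero =>
    have hb : (b.factorial : ℝ) ≠ 0 := Nat.cast_ne_zero.mpr b.factorial_ne_zero
    rw [Jv]
    simp only [zero_add, Finset.sum_range_one, pow_zero, Nat.choose_self]
    rw [Nat.factorial_succ]
    push_cast
    field_simp
    simp
  | succ a ih =>
    rw [Jv_succ, ih b, ih (b + 1)]
    have h1 : a + (b + 1) + 1 = (a + b + 1) + 1 := by omega
    have h2 : a + 1 + b + 1 = (a + b + 1) + 1 := by omega
    rw [h1, h2, Nat.factorial_succ (a + b + 1), Nat.factorial_succ b, Nat.factorial_succ a]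
    have hab : ((a + b + 1).factorial : ℝ) ≠ 0 := Nat.cast_ne_zero.mpr (Nat.factorial_ne_zero _)
    have habp : (0:ℝ) < ((a + b + 1 : ℕ) : ℝ) + 1 := by positivity
    push_cast
    field_simp
    ring


lemma Jv_def (a b : ℕ) : Jv a b =
    ∑ i ∈ Finset.range (a + 1), (-1 : ℝ) ^ i * (a.choose i : ℝ) / ((b : ℝ) + i + 1) := rfl

noncomputable def Sab (a b W : ℕ) : ℝ :=
  ∑ w₂ ∈ Finset.Icc 1 (W / 2), ((W : ℝ) / 2 - (w₂ : ℝ)) ^ a * (w₂ : ℝ) ^ b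

noncomputable def Tab (a b M : ℕ) : ℝ := ∑ W ∈ Finset.Icc 1 M, (W : ℝ) * Sab a b W

lemma Sab_def (a b W : ℕ) : Sab a b W =
    ∑ w₂ ∈ Finset.Icc 1 (W / 2), ((W : ℝ) / 2 - (w₂ : ℝ)) ^ a * (w₂ : ℝ) ^ b := rfl

lemma Tab_def (a b M : ℕ) : Tab a b M = ∑ W ∈ Finset.Icc 1 M, (W : ℝ) * Sab a b W := rfl


lemma Sab_expand (a b W : ℕ) : Sab a b W =
    ∑ i ∈ Finset.range (a + 1),
      (-1 : ℝ) ^ (i + a) * (a.choose i : ℝ) * ((W : ℝ) / 2) ^ i * Pm (a - i + b) (W / 2) := by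
  rw [Sab]
  have hterm : ∀ w ∈ Finset.Icc 1 (W / 2),
      ((W : ℝ) / 2 - (w : ℝ)) ^ a * (w : ℝ) ^ b =
      ∑ i ∈ Finset.range (a + 1),
        (-1 : ℝ) ^ (i + a) * (a.choose i : ℝ) * ((W : ℝ) / 2) ^ i * (w : ℝ) ^ (a - i + b) := by
    intro w _
    rw [sub_pow, Finset.sum_mul]
    apply Finset.sum_congr rfl
    intro i _
    have hp : (w : ℝ) ^ (a - i + b) = (w : ℝ) ^ (a - i) * (w : ℝ) ^ b := pow_add _ _ _
    rw [hp]
    ring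
  rw [Finset.sum_congr rfl hterm, Finset.sum_comm]
  apply Finset.sum_congr rfl
  intro i _
  rw [Pm_def, Finset.mul_sum]

lemma half_div_tendsto : Tendsto (fun W : ℕ => ((W / 2 : ℕ) : ℝ) / W) atTop (𝓝 (1 / 2)) := by
  have := nat_div_cast_tendsto 1 (h := 2) (by omega)
  simp only [one_mul, Nat.cast_one] at this
  exact this

lemma half_tendsto_atTop : Tendsto (fun W : ℕ => W / 2) atTop atTop := by
  have := nat_div_tendsto_atTop (s := 1) (h := 2) (by omega) (by omega)
  simpa using this

lemma tendsto_Sab (a b : ℕ) :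
    Tendsto (fun W : ℕ => Sab a b W / (W : ℝ) ^ (a + b + 1)) atTop
      (𝓝 (Jv a b / 2 ^ (a + b + 1))) := by
  set ℓ : ℕ → ℝ := fun i =>
    (-1 : ℝ) ^ (i + a) * (a.choose i : ℝ) * (1 / 2 : ℝ) ^ (a + b + 1) / (((a - i + b : ℕ) : ℝ) + 1)
    with hℓ
  have hterm : ∀ i ∈ Finset.range (a + 1),
      Tendsto (fun W : ℕ =>
        (-1 : ℝ) ^ (i + a) * (a.choose i : ℝ) * ((W : ℝ) / 2) ^ i * Pm (a - i + b) (W / 2)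
          / (W : ℝ) ^ (a + b + 1)) atTop (𝓝 (ℓ i)) := by
    intro i hi
    have hia : i ≤ a := Nat.lt_succ_iff.mp (Finset.mem_range.mp hi)
    have hP : Tendsto (fun W : ℕ => Pm (a - i + b) (W / 2) / (W : ℝ) ^ ((a - i + b) + 1)) atTop
        (𝓝 (1 / (((a - i + b : ℕ) : ℝ) + 1) * (1 / 2) ^ ((a - i + b) + 1))) :=
      tendsto_comp_div (fun W => W / 2) (tendsto_sum_pow (a - i + b)) half_tendsto_atTop
        half_div_tendsto
    have hC : Tendsto (fun W : ℕ =>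
        ((-1 : ℝ) ^ (i + a) * (a.choose i : ℝ) * (1 / 2 : ℝ) ^ i) *
          (Pm (a - i + b) (W / 2) / (W : ℝ) ^ ((a - i + b) + 1))) atTop
        (𝓝 (((-1 : ℝ) ^ (i + a) * (a.choose i : ℝ) * (1 / 2 : ℝ) ^ i) *
          (1 / (((a - i + b : ℕ) : ℝ) + 1) * (1 / 2) ^ ((a - i + b) + 1)))) := hP.const_mul _
    have hpow12 : (1 / 2 : ℝ) ^ i * (1 / 2 : ℝ) ^ ((a - i + b) + 1) = (1 / 2 : ℝ) ^ (a + b + 1) := by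
      rw [← pow_add]; congr 1; omega
    have hlim : ((-1 : ℝ) ^ (i + a) * (a.choose i : ℝ) * (1 / 2 : ℝ) ^ i) *
        (1 / (((a - i + b : ℕ) : ℝ) + 1) * (1 / 2) ^ ((a - i + b) + 1)) = ℓ i := by
      simp only [hℓ]
      calc ((-1 : ℝ) ^ (i + a) * (a.choose i : ℝ) * (1 / 2 : ℝ) ^ i) *
          (1 / (((a - i + b : ℕ) : ℝ) + 1) * (1 / 2) ^ ((a - i + b) + 1))
          = ((-1 : ℝ) ^ (i + a) * (a.choose i : ℝ)) *
            ((1 / 2 : ℝ) ^ i * (1 / 2 : ℝ) ^ ((a - i + b) + 1)) / (((a - i + b : ℕ) : ℝ) + 1) := by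
            ring
        _ = (-1 : ℝ) ^ (i + a) * (a.choose i : ℝ) * (1 / 2 : ℝ) ^ (a + b + 1)
            / (((a - i + b : ℕ) : ℝ) + 1) := by rw [hpow12]
    rw [hlim] at hC
    apply hC.congr'
    filter_upwards [eventually_ge_atTop 1] with W hW
    have hW0 : (0 : ℝ) < (W : ℝ) := by exact_mod_cast Nat.pos_of_ne_zero (by omega)
    have hpow : (W : ℝ) ^ (a + b + 1) = (W : ℝ) ^ i * (W : ℝ) ^ ((a - i + b) + 1) := by
      rw [← pow_add]; congr 1; omega
    have h2 : ((W : ℝ) / 2) ^ i = (1 / 2 : ℝ) ^ i * (W : ℝ) ^ i := by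
      rw [div_pow, div_pow]; ring
    rw [hpow, h2]
    field_simp
  have htot := tendsto_finset_sum (Finset.range (a + 1)) hterm
  have hsum : (∑ i ∈ Finset.range (a + 1), ℓ i) = Jv a b / 2 ^ (a + b + 1) := by
    have hrefl := Finset.sum_range_reflect
      (fun j => (-1 : ℝ) ^ j * (a.choose j : ℝ) / ((b : ℝ) + j + 1) * (1 / 2 : ℝ) ^ (a + b + 1))
      (a + 1)
    have hJ : (∑ j ∈ Finset.range (a + 1),
        (-1 : ℝ) ^ j * (a.choose j : ℝ) / ((b : ℝ) + j + 1) * (1 / 2 : ℝ) ^ (a + b + 1))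
        = Jv a b * (1 / 2 : ℝ) ^ (a + b + 1) := by
      rw [Jv_def, Finset.sum_mul]
    have hℓeq : ∀ i ∈ Finset.range (a + 1), ℓ i =
        (-1 : ℝ) ^ (a + 1 - 1 - i) * (a.choose (a + 1 - 1 - i) : ℝ)
          / ((b : ℝ) + (a + 1 - 1 - i : ℕ) + 1) * (1 / 2 : ℝ) ^ (a + b + 1) := by
      intro i hi
      have hia : i ≤ a := Nat.lt_succ_iff.mp (Finset.mem_range.mp hi)
      have h1 : a + 1 - 1 - i = a - i := by omega
      rw [h1]
      simp only [hℓ]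
      have hsymm : a.choose (a - i) = a.choose i := Nat.choose_symm hia
      have hsign : (-1 : ℝ) ^ (a - i) = (-1 : ℝ) ^ (i + a) := by
        rw [show i + a = (a - i) + 2 * i by omega, pow_add, pow_mul]
        simp
      rw [hsymm, hsign]
      have hc : ((a - i + b : ℕ) : ℝ) + 1 = (b : ℝ) + ((a - i : ℕ) : ℝ) + 1 := by
        push_cast; ring
      rw [hc]
      ring
    rw [Finset.sum_congr rfl hℓeq, hrefl, hJ]
    rw [one_div, inv_pow, ← div_eq_mul_inv]
  rw [hsum] at htot
  apply htot.congr
  intro W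
  rw [Sab_expand, Finset.sum_div]

lemma Sab_nonneg (a b W : ℕ) : 0 ≤ Sab a b W := by
  apply Finset.sum_nonneg
  intro w hw
  rw [Finset.mem_Icc] at hw
  have h1 : (w : ℝ) ≤ (W : ℝ) / 2 := by
    calc (w : ℝ) ≤ ((W / 2 : ℕ) : ℝ) := by exact_mod_cast hw.2
      _ ≤ (W : ℝ) / 2 := Nat.cast_div_le
  have h2 : (0 : ℝ) ≤ (W : ℝ) / 2 - w := by linarith
  positivity

lemma Sab_le (a b W : ℕ) : Sab a b W ≤ (W : ℝ) ^ (a + b + 1) := by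
  have hx : (0 : ℝ) ≤ (W : ℝ) / 2 := by positivity
  have hstep : Sab a b W ≤ ∑ _w ∈ Finset.Icc 1 (W / 2), ((W : ℝ) / 2) ^ a * ((W : ℝ) / 2) ^ b := by
    apply Finset.sum_le_sum
    intro w hw
    rw [Finset.mem_Icc] at hw
    have h1 : (w : ℝ) ≤ (W : ℝ) / 2 := by
      calc (w : ℝ) ≤ ((W / 2 : ℕ) : ℝ) := by exact_mod_cast hw.2
        _ ≤ (W : ℝ) / 2 := Nat.cast_div_le
    have h2 : (0 : ℝ) ≤ (W : ℝ) / 2 - w := by linarith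
    have hw0 : (0 : ℝ) ≤ (w : ℝ) := Nat.cast_nonneg w
    apply mul_le_mul (pow_le_pow_left₀ h2 (by linarith [hw0]) a)
      (pow_le_pow_left₀ hw0 h1 b) (by positivity) (by positivity)
  have hcard : ∑ _w ∈ Finset.Icc 1 (W / 2), ((W : ℝ) / 2) ^ a * ((W : ℝ) / 2) ^ b
      = ((W / 2 : ℕ) : ℝ) * (((W : ℝ) / 2) ^ a * ((W : ℝ) / 2) ^ b) := by
    rw [Finset.sum_const, Nat.card_Icc, Nat.add_sub_cancel, nsmul_eq_mul]
  calc Sab a b W ≤ ((W / 2 : ℕ) : ℝ) * (((W : ℝ) / 2) ^ a * ((W : ℝ) / 2) ^ b) := by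
        rw [← hcard]; exact hstep
    _ ≤ ((W : ℝ) / 2) * (((W : ℝ) / 2) ^ a * ((W : ℝ) / 2) ^ b) := by
        apply mul_le_mul_of_nonneg_right Nat.cast_div_le (by positivity)
    _ = ((W : ℝ) / 2) ^ (a + b + 1) := by rw [pow_add, pow_one]; ring
    _ ≤ (W : ℝ) ^ (a + b + 1) := by
        apply pow_le_pow_left₀ hx
        linarith [Nat.cast_nonneg (α := ℝ) W]

lemma Tab_nonneg (a b M : ℕ) : 0 ≤ Tab a b M :=
  Finset.sum_nonneg fun W _ => mul_nonneg (Nat.cast_nonneg W) (Sab_nonneg a b W)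

lemma Tab_le (a b M : ℕ) : Tab a b M ≤ (M : ℝ) ^ (a + b + 3) := by
  have hstep : Tab a b M ≤ ∑ _W ∈ Finset.Icc 1 M, (M : ℝ) ^ (a + b + 2) := by
    apply Finset.sum_le_sum
    intro W hW
    rw [Finset.mem_Icc] at hW
    have hWM : (W : ℝ) ≤ (M : ℝ) := by exact_mod_cast hW.2
    have hW0 : (0 : ℝ) ≤ (W : ℝ) := Nat.cast_nonneg W
    calc (W : ℝ) * Sab a b W ≤ (W : ℝ) * (W : ℝ) ^ (a + b + 1) :=
          mul_le_mul_of_nonneg_left (Sab_le a b W) hW0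
      _ = (W : ℝ) ^ (a + b + 2) := by rw [pow_succ]; ring
      _ ≤ (M : ℝ) ^ (a + b + 2) := pow_le_pow_left₀ hW0 hWM _
  calc Tab a b M ≤ ∑ _W ∈ Finset.Icc 1 M, (M : ℝ) ^ (a + b + 2) := hstep
    _ = (M : ℝ) * (M : ℝ) ^ (a + b + 2) := by
        rw [Finset.sum_const, Nat.card_Icc, Nat.add_sub_cancel, nsmul_eq_mul]
    _ = (M : ℝ) ^ (a + b + 3) := by rw [pow_succ]; ring

lemma regroup (a b N : ℕ) :
    ∑ p ∈ (Finset.Icc 1 (2 * N) ×ˢ Finset.Icc 1 (2 * N)).filter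
        (fun p : ℕ × ℕ => p.1 * p.2 ≤ 2 * N), (p.1 : ℝ) * Sab a b p.1
      = ∑ k ∈ Finset.range (2 * N), Tab a b (2 * N / (k + 1)) := by
  rw [Finset.sum_filter, Finset.sum_product_right]
  have hH : ∀ H ∈ Finset.Icc 1 (2 * N),
      (∑ W ∈ Finset.Icc 1 (2 * N), if W * H ≤ 2 * N then (W : ℝ) * Sab a b W else 0)
        = Tab a b (2 * N / H) := by
    intro H hHm
    rw [Finset.mem_Icc] at hHm
    rw [← Finset.sum_filter, Tab_def]
    apply Finset.sum_congr _ (fun _ _ => rfl)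
    ext W
    simp only [Finset.mem_filter, Finset.mem_Icc]
    constructor
    · rintro ⟨⟨h1, _⟩, h3⟩
      exact ⟨h1, (Nat.le_div_iff_mul_le (by omega)).mpr h3⟩
    · rintro ⟨h1, h2⟩
      have h3 : W * H ≤ 2 * N := (Nat.le_div_iff_mul_le (by omega)).mp h2
      have h4 : W ≤ 2 * N := le_trans (Nat.le_mul_of_pos_right W (by omega)) h3
      exact ⟨⟨h1, h4⟩, h3⟩
  rw [Finset.sum_congr rfl hH,
    show Finset.Icc 1 (2 * N) = Finset.Ico 1 (2 * N + 1) from (Finset.Ico_add_one_right_eq_Icc ..).symm,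
    Finset.sum_Ico_eq_sum_range]
  apply Finset.sum_congr (by congr 1)
  intro k _
  rw [Nat.add_comm 1 k]


/-- For all natural numbers `a, b` with `d = a + b + 3`, the normalized count
`(1/N^d) · ∑_{(W,H) ∈ ℕ₊², W·H ≤ 2N} W · ∑_{w₂=1}^{⌊W/2⌋} (W/2 − w₂)^a · w₂^b`
tends to `(4·a!·b!/(a+b+1)!) · ζ(d)/d` as `N → ∞`. -/
theorem quadratic_one_cylinder_count_asymptotics (a b : ℕ) :
    Tendsto (fun N : ℕ =>
        (1 / (N : ℝ) ^ (a + b + 3)) *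
          ∑ p ∈ (Finset.Icc 1 (2 * N) ×ˢ Finset.Icc 1 (2 * N)).filter
              (fun p : ℕ × ℕ => p.1 * p.2 ≤ 2 * N),
            (p.1 : ℝ) *
              ∑ w₂ ∈ Finset.Icc 1 (p.1 / 2),
                ((p.1 : ℝ) / 2 - (w₂ : ℝ)) ^ a * (w₂ : ℝ) ^ b)
      atTop
      (nhds ((4 * Nat.factorial a * Nat.factorial b / Nat.factorial (a + b + 1)) *
        (zetaVal (a + b + 3) / (a + b + 3)))) := by
  set d : ℕ := a + b + 3 with hd
  set c : ℝ := Jv a b / 2 ^ (a + b + 1) with hc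
  set F : ℕ → ℕ → ℝ := fun N k => (1 / (N : ℝ) ^ d) * Tab a b (2 * N / (k + 1)) with hF
  set G : ℕ → ℝ := fun k => (c / ((((a + b + 2 : ℕ)) : ℝ) + 1)) * ((2 : ℝ) / ((k : ℝ) + 1)) ^ d
    with hG
  -- T asymptotics
  have h_u : Tendsto (fun n : ℕ => ((n : ℝ) * Sab a b n) / (n : ℝ) ^ (a + b + 2)) atTop (𝓝 c) := by
    apply (tendsto_Sab a b).congr'
    filter_upwards [eventually_ge_atTop 1] with n hn
    have hn0 : (n : ℝ) ≠ 0 := Nat.cast_ne_zero.mpr (by omega)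
    rw [pow_succ]
    field_simp
    ring
  have h_T : Tendsto (fun M : ℕ => Tab a b M / (M : ℝ) ^ d) atTop
      (𝓝 (c / ((((a + b + 2 : ℕ)) : ℝ) + 1))) := by
    have := stolz h_u
    apply this.congr
    intro M
    rw [Tab_def]
  -- pointwise limits
  have hab : ∀ k : ℕ, Tendsto (fun N => F N k) atTop (𝓝 (G k)) := by
    intro k
    have hr : Tendsto (fun N : ℕ => 2 * N / (k + 1)) atTop atTop :=
      nat_div_tendsto_atTop (by omega) (by omega)
    have hq : Tendsto (fun N : ℕ => ((2 * N / (k + 1) : ℕ) : ℝ) / N) atTop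
        (𝓝 ((2 : ℝ) / ((k : ℝ) + 1))) := by
      have := nat_div_cast_tendsto 2 (h := k + 1) (by omega)
      have he : ((2 : ℕ) : ℝ) / ((k + 1 : ℕ) : ℝ) = (2 : ℝ) / ((k : ℝ) + 1) := by push_cast; ring
      rw [he] at this
      exact this
    have := tendsto_comp_div (fun N => 2 * N / (k + 1)) h_T hr hq
    apply this.congr
    intro N
    simp only [hF]
    rw [one_div, inv_mul_eq_div]
  -- bound
  have h_bound : ∀ᶠ N in atTop, ∀ k, ‖F N k‖ ≤ (2 : ℝ) ^ d / ((k : ℝ) + 1) ^ d := by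
    filter_upwards [eventually_ge_atTop 1] with N hN
    intro k
    have hN0 : (0 : ℝ) < (N : ℝ) := by exact_mod_cast Nat.pos_of_ne_zero (by omega)
    have hk0 : (0 : ℝ) < (k : ℝ) + 1 := by positivity
    have hFn : F N k = Tab a b (2 * N / (k + 1)) / (N : ℝ) ^ d := by
      simp only [hF]
      rw [one_div, inv_mul_eq_div]
    have hM : ((2 * N / (k + 1) : ℕ) : ℝ) ≤ 2 * (N : ℝ) / ((k : ℝ) + 1) := by
      calc ((2 * N / (k + 1) : ℕ) : ℝ) ≤ ((2 * N : ℕ) : ℝ) / ((k + 1 : ℕ) : ℝ) := Nat.cast_div_le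
        _ = 2 * (N : ℝ) / ((k : ℝ) + 1) := by push_cast; ring
    have hTb : Tab a b (2 * N / (k + 1)) ≤ (2 * (N : ℝ) / ((k : ℝ) + 1)) ^ d := by
      calc Tab a b (2 * N / (k + 1)) ≤ ((2 * N / (k + 1) : ℕ) : ℝ) ^ d := Tab_le a b _
        _ ≤ (2 * (N : ℝ) / ((k : ℝ) + 1)) ^ d := pow_le_pow_left₀ (Nat.cast_nonneg _) hM d
    rw [hFn, Real.norm_eq_abs, abs_of_nonneg (div_nonneg (Tab_nonneg a b _) (by positivity))]
    rw [div_le_iff₀ (by positivity)]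
    calc Tab a b (2 * N / (k + 1)) ≤ (2 * (N : ℝ) / ((k : ℝ) + 1)) ^ d := hTb
      _ = (2 : ℝ) ^ d / ((k : ℝ) + 1) ^ d * (N : ℝ) ^ d := by
          rw [div_pow, mul_pow]
          field_simp
  -- summability of the bound
  have h_sum : Summable (fun k : ℕ => (2 : ℝ) ^ d / ((k : ℝ) + 1) ^ d) := by
    have h0 : Summable (fun n : ℕ => 1 / (n : ℝ) ^ d) :=
      Real.summable_one_div_nat_pow.mpr (by omega)
    have h1 : Summable (fun k : ℕ => 1 / ((k : ℝ) + 1) ^ d) := by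
      have h2 := h0.comp_injective (add_left_injective 1)
      apply h2.congr
      intro k
      simp only [Function.comp]
      push_cast
      ring_nf
    apply (h1.mul_left ((2 : ℝ) ^ d)).congr
    intro k
    ring
  have key := tendsto_tsum_of_dominated_convergence h_sum hab h_bound
  -- identify the tsum of G
  have hGsum : ∑' k, G k = (4 * (Nat.factorial a : ℝ) * (Nat.factorial b : ℝ)
      / (Nat.factorial (a + b + 1) : ℝ)) * (zetaVal d / ((a : ℝ) + (b : ℝ) + 3)) := by
    have hGk : ∀ k : ℕ, G k = ((c / ((((a + b + 2 : ℕ)) : ℝ) + 1)) * (2 : ℝ) ^ d) *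
        (1 / ((k : ℝ) + 1) ^ d) := by
      intro k
      simp only [hG]
      rw [div_pow]
      ring
    rw [tsum_congr hGk, tsum_mul_left, ← zetaVal]
    have hfac : ((a + b + 1).factorial : ℝ) ≠ 0 := Nat.cast_ne_zero.mpr (Nat.factorial_ne_zero _)
    rw [hc, Jv_eq]
    have h2d : (2 : ℝ) ^ d = 2 ^ (a + b + 1) * 4 := by
      rw [hd, show a + b + 3 = (a + b + 1) + 2 by omega, pow_add]
      norm_num
    rw [h2d]
    have hcast : (((a + b + 2 : ℕ)) : ℝ) + 1 = (a : ℝ) + (b : ℝ) + 3 := by push_cast; ring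
    rw [hcast]
    have hab3 : ((a : ℝ) + (b : ℝ) + 3) ≠ 0 := by positivity
    have h2p : ((2 : ℝ) ^ (a + b + 1)) ≠ 0 := by positivity
    field_simp
  have hrw : ∀ N : ℕ, (1 / (N : ℝ) ^ d) *
      (∑ p ∈ (Finset.Icc 1 (2 * N) ×ˢ Finset.Icc 1 (2 * N)).filter
          (fun p : ℕ × ℕ => p.1 * p.2 ≤ 2 * N),
        (p.1 : ℝ) * ∑ w₂ ∈ Finset.Icc 1 (p.1 / 2),
          ((p.1 : ℝ) / 2 - (w₂ : ℝ)) ^ a * (w₂ : ℝ) ^ b) = ∑' k, F N k := by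
    intro N
    have hS : ∀ p : ℕ × ℕ, (p.1 : ℝ) * (∑ w₂ ∈ Finset.Icc 1 (p.1 / 2),
        ((p.1 : ℝ) / 2 - (w₂ : ℝ)) ^ a * (w₂ : ℝ) ^ b) = (p.1 : ℝ) * Sab a b p.1 := by
      intro p
      rw [Sab_def]
    have hts : ∑' k, F N k = ∑ k ∈ Finset.range (2 * N), F N k := by
      apply tsum_eq_sum
      intro k hk
      rw [Finset.mem_range, not_lt] at hk
      have : 2 * N / (k + 1) = 0 := Nat.div_eq_of_lt (by omega)
      simp only [hF, this]
      rw [Tab_def]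
      simp
    rw [hts]
    simp_rw [hS]
    rw [regroup a b N, Finset.mul_sum]
  have hfinal := key.congr (fun N => (hrw N).symm)
  rw [hGsum] at hfinal
  exact hfinal
end

section
/- As the integer g tends to infinity, the quantity (2·π^{2g}/(2g+1)!) · (2g−3)!!/(2g−2)!! is asymptotically equivalent to (1/(π²·g)) · (π·e/(2g+1))^{2g+1}; that is, the ratio of the two expressions tends to 1. -/
open Filter Real Nat


private lemma fs (n : ℕ) (hn : n ≠ 0) :
    (Nat.factorial n : ℝ) = Stirling.stirlingSeq n * (Real.sqrt (2*n) * ((n:ℝ)/Real.exp 1)^n) := by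
  have hn' : (0:ℝ) < n := by exact_mod_cast Nat.pos_of_ne_zero hn
  have h1 : (0:ℝ) < Real.sqrt (2*n) := Real.sqrt_pos.mpr (by positivity)
  have h2 : ((n:ℝ)/Real.exp 1)^n ≠ 0 := pow_ne_zero _ (div_ne_zero hn'.ne' (Real.exp_ne_zero 1))
  rw [Stirling.stirlingSeq, div_mul_cancel₀ _ (mul_ne_zero h1.ne' h2)]

private lemma shift_div (a b : ℝ) :
    Tendsto (fun g : ℕ => ((g : ℝ) + a) / ((g : ℝ) + b)) atTop (nhds 1) := by
  have ha : Tendsto (fun g : ℕ => a / (g:ℝ)) atTop (nhds 0) :=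
    tendsto_const_div_atTop_nhds_zero_nat a
  have hb : Tendsto (fun g : ℕ => b / (g:ℝ)) atTop (nhds 0) :=
    tendsto_const_div_atTop_nhds_zero_nat b
  have h0 : Tendsto (fun g : ℕ => (1 + a / g) / (1 + b / g)) atTop (nhds 1) := by
    have := ((tendsto_const_nhds (x := (1:ℝ)) (f := atTop)).add ha).div
      ((tendsto_const_nhds (x := (1:ℝ)) (f := atTop)).add hb) (by norm_num)
    simp only [add_zero, div_one] at this; exact this
  refine h0.congr' ?_
  filter_upwards [eventually_gt_atTop ⌈|b|⌉₊] with g hg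
  have hbg : |b| < (g:ℝ) := lt_of_le_of_lt (Nat.le_ceil _) (by exact_mod_cast hg)
  have hg0 : (0:ℝ) < g := lt_of_le_of_lt (abs_nonneg b) hbg
  have hgb : (g:ℝ) + b ≠ 0 := by nlinarith [neg_abs_le b]
  field_simp

private noncomputable def F (g : ℕ) : ℝ :=
  Real.pi * ((2*(g:ℝ) * Real.sqrt ((g:ℝ)-1)) / (Real.sqrt (2*(2*(g:ℝ)+1)) * ((g:ℝ)-1))) *
    (Stirling.stirlingSeq (2*g-2) / (Stirling.stirlingSeq (2*g+1) * Stirling.stirlingSeq (g-1)^2))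

private lemma tendsto_F : Tendsto F atTop (nhds 1) := by
  have hs := Stirling.tendsto_stirlingSeq_sqrt_pi
  have hn1 : Tendsto (fun g : ℕ => 2*g-2) atTop atTop :=
    tendsto_atTop_atTop.mpr (fun b => ⟨b+2, fun a ha => by omega⟩)
  have hn2 : Tendsto (fun g : ℕ => 2*g+1) atTop atTop :=
    tendsto_atTop_atTop.mpr (fun b => ⟨b, fun a ha => by omega⟩)
  have hn3 : Tendsto (fun g : ℕ => g-1) atTop atTop :=
    tendsto_atTop_atTop.mpr (fun b => ⟨b+1, fun a ha => by omega⟩)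
  have hpi : Real.sqrt Real.pi ≠ 0 := (Real.sqrt_pos.mpr Real.pi_pos).ne'
  have hrat : Tendsto (fun g : ℕ => Stirling.stirlingSeq (2*g-2) /
      (Stirling.stirlingSeq (2*g+1) * Stirling.stirlingSeq (g-1)^2)) atTop
      (nhds (Real.sqrt Real.pi / (Real.sqrt Real.pi * Real.sqrt Real.pi ^2))) :=
    (hs.comp hn1).div ((hs.comp hn2).mul ((hs.comp hn3).pow 2))
      (by positivity)
  -- middle factor
  have hGsq : Tendsto (fun g : ℕ => (2*(g:ℝ)/(2*(g:ℝ)+1)) * ((g:ℝ)/((g:ℝ)-1))) atTop (nhds 1) := by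
    have h1 : Tendsto (fun g : ℕ => 2*(g:ℝ)/(2*(g:ℝ)+1)) atTop (nhds 1) := by
      have := (shift_div 0 1).comp (tendsto_atTop_atTop.mpr
        (fun b => ⟨b, fun a ha => by omega⟩) : Tendsto (fun g : ℕ => 2*g) atTop atTop)
      simpa [Function.comp_def, Nat.cast_mul, mul_comm] using this
    have h2 : Tendsto (fun g : ℕ => (g:ℝ)/((g:ℝ)-1)) atTop (nhds 1) := by
      have := shift_div 0 (-1)
      simpa [sub_eq_add_neg] using this
    simpa using h1.mul h2
  have hG : Tendsto (fun g : ℕ =>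
      (2*(g:ℝ) * Real.sqrt ((g:ℝ)-1)) / (Real.sqrt (2*(2*(g:ℝ)+1)) * ((g:ℝ)-1)))
      atTop (nhds 1) := by
    have hsq : Tendsto (fun g : ℕ => Real.sqrt ((2*(g:ℝ)/(2*(g:ℝ)+1)) * ((g:ℝ)/((g:ℝ)-1))))
        atTop (nhds 1) := by
      have := (Real.continuous_sqrt.tendsto 1).comp hGsq
      rw [Real.sqrt_one] at this; exact this
    refine hsq.congr' ?_
    filter_upwards [eventually_ge_atTop 2] with g hg
    have hx : (2:ℝ) ≤ (g:ℝ) := by exact_mod_cast hg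
    set x := (g:ℝ) with hxdef
    have hx1 : 0 < x - 1 := by linarith
    have hx0 : 0 < x := by linarith
    have h21 : (0:ℝ) < 2*(2*x+1) := by linarith
    have key : (2*x/(2*x+1)) * (x/(x-1)) =
        ((2*x*Real.sqrt (x-1)) / (Real.sqrt (2*(2*x+1)) * (x-1)))^2 := by
      rw [div_pow, mul_pow, mul_pow, mul_pow, Real.sq_sqrt hx1.le, Real.sq_sqrt h21.le]
      field_simp
    rw [key, Real.sqrt_sq (by positivity)]
  have := (tendsto_const_nhds (x := Real.pi) (f := atTop)).mul hG |>.mul hrat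
  have heq : Real.pi * 1 * (Real.sqrt Real.pi / (Real.sqrt Real.pi * Real.sqrt Real.pi ^2)) = 1 := by
    rw [Real.sq_sqrt Real.pi_pos.le]
    field_simp
  rw [heq] at this
  exact this

/-- As `g → ∞`, the Masur–Veech volume `Vol H₁^{hyp}(2g−2) =
(2·π^{2g}/(2g+1)!) · (2g−3)!!/(2g−2)!!` is asymptotically equivalent to
`(1/(π²·g)) · (π·e/(2g+1))^{2g+1}`: the ratio tends to `1`. -/
theorem hyperelliptic_minimal_stratum_volume_asymptotics :
    Tendsto (fun g : ℕ =>
        ((2 * Real.pi ^ (2 * g) / (Nat.factorial (2 * g + 1) : ℝ)) *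
            ((Nat.doubleFactorial (2 * g - 3) : ℝ) /
              (Nat.doubleFactorial (2 * g - 2) : ℝ))) /
          ((1 / (Real.pi ^ 2 * (g : ℝ))) *
            (Real.pi * Real.exp 1 / (2 * g + 1)) ^ (2 * g + 1)))
      atTop (nhds 1) := by
  refine tendsto_F.congr' ?_
  filter_upwards [eventually_ge_atTop 2] with g hg
  obtain ⟨k, rfl⟩ := Nat.exists_eq_add_of_le hg
  simp only [show 2*(2+k)-3 = 2*k+1 from by omega, show 2*(2+k)-2 = 2*k+2 from by omega,
    show 2*(2+k)+1 = 2*k+5 from by omega, show (2+k)-1 = k+1 from by omega, F]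
  have hd1 : (2*k+2)‼ = 2^(k+1) * Nat.factorial (k+1) := by
    rw [show 2*k+2 = 2*(k+1) from by ring]; exact Nat.doubleFactorial_two_mul (k+1)
  have hd2 : Nat.factorial (2*k+2) = (2*k+2)‼ * (2*k+1)‼ := by
    have := Nat.factorial_eq_mul_doubleFactorial (2*k+1)
    simpa [show 2*k+1+1 = 2*k+2 from by omega] using this
  have hratio : ((2*k+1)‼ : ℝ) / ((2*k+2)‼ : ℝ) =
      (Nat.factorial (2*k+2) : ℝ) / (((2:ℝ)^(k+1))^2 * ((Nat.factorial (k+1) : ℝ))^2) := by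
    have h2 : ((2*k+2)‼ : ℝ) = 2^(k+1) * (Nat.factorial (k+1):ℝ) := by
      rw [hd1]; push_cast; ring
    have h1 : (Nat.factorial (2*k+2) : ℝ) = (2^(k+1) * (Nat.factorial (k+1):ℝ)) * ((2*k+1)‼ : ℝ) := by
      rw [hd2, hd1]; push_cast; ring
    rw [h1, h2]
    have hpos : (0:ℝ) < 2^(k+1) * (Nat.factorial (k+1):ℝ) := by positivity
    field_simp
  have hA : Real.sqrt (2*(2*(k:ℝ)+2)) = 2 * Real.sqrt ((k:ℝ)+1) := by
    rw [show 2*(2*(k:ℝ)+2) = 2^2*((k:ℝ)+1) by ring, Real.sqrt_mul (by positivity),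
      Real.sqrt_sq (by norm_num)]
  have e1 : (Nat.factorial (2*k+5) : ℝ) = Stirling.stirlingSeq (2*k+5) *
      (Real.sqrt (2*(2*(k:ℝ)+5)) * ((2*(k:ℝ)+5)/Real.exp 1)^(2*k+5)) := by
    rw [fs (2*k+5) (by omega)]; push_cast; ring
  have e2 : (Nat.factorial (2*k+2) : ℝ) = Stirling.stirlingSeq (2*k+2) *
      ((2 * Real.sqrt ((k:ℝ)+1)) * ((2:ℝ)^(2*k+2) * (((k:ℝ)+1)/Real.exp 1)^(2*k+2))) := by
    rw [fs (2*k+2) (by omega)]; push_cast; rw [hA,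
      show (2*(k:ℝ)+2)/Real.exp 1 = 2*(((k:ℝ)+1)/Real.exp 1) by ring, mul_pow]
  have e3sq : ((Nat.factorial (k+1) : ℝ))^2 = Stirling.stirlingSeq (k+1)^2 *
      ((2*((k:ℝ)+1)) * ((((k:ℝ)+1)/Real.exp 1)^(k+1))^2) := by
    rw [fs (k+1) (by omega)]; push_cast
    rw [mul_pow, mul_pow, Real.sq_sqrt (by positivity)]
  have hq : Real.sqrt (((2+k:ℕ):ℝ)-1) = Real.sqrt ((k:ℝ)+1) := by
    congr 1
    push_cast
    ring
  rw [hratio, e1, e2, e3sq, hq]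
  have hs1 : (0:ℝ) < Stirling.stirlingSeq (2*k+5) := by
    have := Stirling.stirlingSeq'_pos (2*k+4); simpa [show 2*k+4+1 = 2*k+5 from by omega] using this
  have hs2 : (0:ℝ) < Stirling.stirlingSeq (2*k+2) := by
    have := Stirling.stirlingSeq'_pos (2*k+1); simpa [show 2*k+1+1 = 2*k+2 from by omega] using this
  have hs3 : (0:ℝ) < Stirling.stirlingSeq (k+1) := Stirling.stirlingSeq'_pos k
  push_cast
  rw [show (2*(2*(2+(k:ℝ))+1)) = (2*(2*(k:ℝ)+5)) by ring,
    show (2:ℝ)+(k:ℝ)-1 = (k:ℝ)+1 by ring]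
  have hq1 : (0:ℝ) < Real.sqrt ((k:ℝ)+1) := Real.sqrt_pos.mpr (by positivity)
  have hr1 : (0:ℝ) < Real.sqrt (2*(2*(k:ℝ)+5)) := Real.sqrt_pos.mpr (by positivity)
  have hpi : (0:ℝ) < Real.pi := Real.pi_pos
  have hexp : (0:ℝ) < Real.exp 1 := Real.exp_pos 1
  set E := Real.exp 1 with hE
  set P := Real.pi with hP
  set q := Real.sqrt ((k:ℝ)+1) with hqq
  set r := Real.sqrt (2*(2*(k:ℝ)+5)) with hrr
  set s1 := Stirling.stirlingSeq (2*k+5) with hS1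
  set s2 := Stirling.stirlingSeq (2*k+2) with hS2
  set s3 := Stirling.stirlingSeq (k+1) with hS3
  have hk0 : (0:ℝ) < (k:ℝ)+1 := by positivity
  have hk2 : (0:ℝ) < 2*(k:ℝ)+2 := by positivity
  have hk5 : (0:ℝ) < 2*(k:ℝ)+5 := by positivity
  have hg2 : (0:ℝ) < 2+(k:ℝ) := by positivity
  rw [show 2*(2+k) = 2*k+4 by ring, show (2*(2+(k:ℝ))+1) = 2*(k:ℝ)+5 by ring]
  simp only [div_pow, mul_pow, ← pow_mul]
  field_simp
  ring
end
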